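/- arXiv:1912.09636 — 4 statements merged into one kernel-verified Lean document; each statement's English description precedes it below -/
import Mathlib

section
/- Van der Corput lemma (first derivative version): Let I = [a,b] with a < b, let Φ : I → ℝ be smooth with Φ' monotone on I and |Φ'(x)| ≥ γ > 0 for all x ∈ I, and let ψ : I → ℂ be smooth. Then |∫_a^b e^{iΦ(x)} ψ(x) dx| ≤ C γ⁻¹ (|ψ(b)| + ∫_a^b |ψ'(x)| dx) for an absolute constant C. -/
open Set Topology Filter MeasureTheory intervalIntegral

lemma vdc_deriv_nonneg {a b : ℝ} {f : ℝ → ℝ} {c : ℝ} (hf : MonotoneOn f (Set.Ioo a b))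
    {x : ℝ} (hx : x ∈ Set.Ioo a b) (hd : HasDerivAt f c x) : 0 ≤ c := by
  have hs : Filter.Tendsto (slope f x) (𝓝[≠] x) (𝓝 c) := hasDerivAt_iff_tendsto_slope.1 hd
  have hs' : Filter.Tendsto (slope f x) (𝓝[>] x) (𝓝 c) :=
    hs.mono_left (nhdsWithin_mono x fun y hy => ne_of_gt hy)
  refine ge_of_tendsto hs' ?_
  have hmem : Set.Ioo x b ∈ 𝓝[>] x := inter_mem_nhdsWithin _ (Iio_mem_nhds hx.2)
  filter_upwards [hmem, self_mem_nhdsWithin] with y hy hxy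
  have h1 : f x ≤ f y := hf hx (⟨lt_trans hx.1 hy.1, hy.2⟩) (le_of_lt hy.1)
  rw [slope_def_field]
  exact div_nonneg (sub_nonneg.2 h1) (sub_pos.2 hy.1).le

theorem van_der_corput_first_derivative :
    ∃ C : ℝ, 0 < C ∧ ∀ (a b : ℝ), a < b → ∀ (Φ : ℝ → ℝ) (ψ : ℝ → ℂ) (γ : ℝ),
      0 < γ →
      ContDiffOn ℝ (⊤ : ℕ∞) Φ (Set.Icc a b) →
      ContDiffOn ℝ (⊤ : ℕ∞) ψ (Set.Icc a b) →
      (MonotoneOn (deriv Φ) (Set.Icc a b) ∨ AntitoneOn (deriv Φ) (Set.Icc a b)) →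
      (∀ x ∈ Set.Icc a b, γ ≤ |deriv Φ x|) →
      ‖∫ x in a..b, Complex.exp (Complex.I * (Φ x : ℂ)) * ψ x‖ ≤
        C * γ⁻¹ * (‖ψ b‖ + ∫ x in a..b, ‖deriv ψ x‖) := by
  refine ⟨4, by norm_num, ?_⟩
  intro a b hab Φ ψ γ hγ hΦ hψ hmono hlow
  have huniq : UniqueDiffOn ℝ (Set.Icc a b) := uniqueDiffOn_Icc hab
  set g : ℝ → ℝ := derivWithin Φ (Set.Icc a b) with hg_def
  have hg_smooth : ContDiffOn ℝ (⊤ : ℕ∞) g (Set.Icc a b) := hΦ.derivWithin huniq (by simp)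
  have hg_cont : ContinuousOn g (Set.Icc a b) := hg_smooth.continuousOn
  -- Φ has derivative g on the interior
  have hΦd : ∀ x ∈ Set.Ioo a b, HasDerivAt Φ (g x) x := by
    intro x hx
    exact ((hΦ.differentiableOn (by simp) x (Ioo_subset_Icc_self hx)).hasDerivWithinAt).hasDerivAt
      (Icc_mem_nhds hx.1 hx.2)
  have hgd : ∀ x ∈ Set.Ioo a b, deriv Φ x = g x := fun x hx => (hΦd x hx).deriv
  -- lower bound on |g| on all of Icc
  have hlow' : ∀ x ∈ Set.Icc a b, γ ≤ |g x| := by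
    intro x hx
    have hxc : x ∈ closure (Set.Ioo a b) := by rw [closure_Ioo hab.ne]; exact hx
    have hne : (𝓝[Set.Ioo a b] x).NeBot := mem_closure_iff_nhdsWithin_neBot.1 hxc
    have htend : Filter.Tendsto (fun y => |g y|) (𝓝[Set.Ioo a b] x) (𝓝 |g x|) :=
      ((hg_cont x hx).mono Set.Ioo_subset_Icc_self).abs
    refine ge_of_tendsto htend ?_
    filter_upwards [self_mem_nhdsWithin] with y hy
    rw [← hgd y hy]
    exact hlow y (Ioo_subset_Icc_self hy)
  have hg_ne : ∀ x ∈ Set.Icc a b, g x ≠ 0 := fun x hx =>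
    abs_pos.1 (lt_of_lt_of_le hγ (hlow' x hx))
  -- h = 1/g
  set h : ℝ → ℝ := fun x => (g x)⁻¹ with hh_def
  have hh_smooth : ContDiffOn ℝ (⊤ : ℕ∞) h (Set.Icc a b) := hg_smooth.inv hg_ne
  have hh_cont : ContinuousOn h (Set.Icc a b) := hh_smooth.continuousOn
  have hh_bound : ∀ x ∈ Set.Icc a b, |h x| ≤ γ⁻¹ := by
    intro x hx
    rw [hh_def, abs_inv]
    exact inv_anti₀ hγ (hlow' x hx)
  set H' : ℝ → ℝ := derivWithin h (Set.Icc a b) with hH'_def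
  have hH'_smooth : ContDiffOn ℝ (⊤ : ℕ∞) H' (Set.Icc a b) := hh_smooth.derivWithin huniq (by simp)
  have hH'_cont : ContinuousOn H' (Set.Icc a b) := hH'_smooth.continuousOn
  have hhd : ∀ x ∈ Set.Ioo a b, HasDerivAt h (H' x) x := by
    intro x hx
    exact ((hh_smooth.differentiableOn (by simp) x (Ioo_subset_Icc_self hx)).hasDerivWithinAt).hasDerivAt
      (Icc_mem_nhds hx.1 hx.2)
  set g' : ℝ → ℝ := derivWithin g (Set.Icc a b) with hg'_def
  have hg'd : ∀ x ∈ Set.Ioo a b, HasDerivAt g (g' x) x := by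
    intro x hx
    exact ((hg_smooth.differentiableOn (by simp) x (Ioo_subset_Icc_self hx)).hasDerivWithinAt).hasDerivAt
      (Icc_mem_nhds hx.1 hx.2)
  have hH'eq : ∀ x ∈ Set.Ioo a b, H' x = -g' x / (g x) ^ 2 := by
    intro x hx
    exact (hhd x hx).unique ((hg'd x hx).inv (hg_ne x (Ioo_subset_Icc_self hx)))
  -- H' has a constant sign on the open interval
  have hsign : (∀ x ∈ Set.Ioo a b, |H' x| = H' x) ∨ (∀ x ∈ Set.Ioo a b, |H' x| = -H' x) := by
    rcases hmono with hm | hm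
    · right
      intro x hx
      have hgm : MonotoneOn g (Set.Ioo a b) := fun u hu v hv huv => by
        rw [← hgd u hu, ← hgd v hv]
        exact hm (Ioo_subset_Icc_self hu) (Ioo_subset_Icc_self hv) huv
      have h0 : 0 ≤ g' x := vdc_deriv_nonneg hgm hx (hg'd x hx)
      have hle : H' x ≤ 0 := by
        rw [hH'eq x hx]
        apply div_nonpos_of_nonpos_of_nonneg (by linarith) (sq_nonneg _)
      exact abs_of_nonpos hle
    · left
      intro x hx
      have hgm : MonotoneOn (fun y => -g y) (Set.Ioo a b) := fun u hu v hv huv => by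
        simp only [neg_le_neg_iff]
        rw [← hgd u hu, ← hgd v hv]
        exact hm (Ioo_subset_Icc_self hu) (Ioo_subset_Icc_self hv) huv
      have h0 : 0 ≤ -g' x := vdc_deriv_nonneg hgm hx (hg'd x hx).neg
      have hle : 0 ≤ H' x := by
        rw [hH'eq x hx]
        apply div_nonneg (by linarith) (sq_nonneg _)
      exact abs_of_nonneg hle
  -- total variation bound
  have hvar : ∀ t ∈ Set.Icc a b, (∫ x in a..t, |H' x|) ≤ 2 * γ⁻¹ := by
    intro t ht
    have hat : a ≤ t := ht.1
    have hsub : Set.Icc a t ⊆ Set.Icc a b := Icc_subset_Icc le_rfl ht.2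
    have hcontt : ContinuousOn H' (Set.uIcc a t) := by
      rw [uIcc_of_le hat]; exact hH'_cont.mono hsub
    have hint : IntervalIntegrable H' MeasureTheory.volume a t := hcontt.intervalIntegrable
    have hFTC : (∫ x in a..t, H' x) = h t - h a :=
      integral_eq_sub_of_hasDerivAt_of_le hat (hh_cont.mono hsub)
        (fun x hx => hhd x ⟨hx.1, lt_of_lt_of_le hx.2 ht.2⟩) hint
    have hnet : ∀ᵐ (x : ℝ), x ≠ t := by
      rw [MeasureTheory.ae_iff]
      simp [Set.setOf_eq_eq_singleton]
    have habs : |h t - h a| ≤ 2 * γ⁻¹ := by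
      have h1 := hh_bound t ht
      have h2 := hh_bound a (left_mem_Icc.2 hab.le)
      calc |h t - h a| ≤ |h t| + |h a| := abs_sub _ _
        _ ≤ γ⁻¹ + γ⁻¹ := add_le_add h1 h2
        _ = 2 * γ⁻¹ := by ring
    rcases hsign with hs | hs
    · have heq : (∫ x in a..t, |H' x|) = ∫ x in a..t, H' x := by
        apply intervalIntegral.integral_congr_ae
        filter_upwards [hnet] with x hx hxI
        rw [uIoc_of_le hat] at hxI
        exact hs x ⟨hxI.1, lt_of_lt_of_le (lt_of_le_of_ne hxI.2 hx) ht.2⟩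
      rw [heq, hFTC]
      exact le_trans (le_abs_self _) habs
    · have heq : (∫ x in a..t, |H' x|) = ∫ x in a..t, -H' x := by
        apply intervalIntegral.integral_congr_ae
        filter_upwards [hnet] with x hx hxI
        rw [uIoc_of_le hat] at hxI
        exact hs x ⟨hxI.1, lt_of_lt_of_le (lt_of_le_of_ne hxI.2 hx) ht.2⟩
      rw [heq, intervalIntegral.integral_neg, hFTC]
      calc -(h t - h a) ≤ |h t - h a| := neg_le_abs _
        _ ≤ 2 * γ⁻¹ := habs
  -- the oscillatory factor
  set u : ℝ → ℂ := fun x => Complex.exp (Complex.I * (Φ x : ℂ)) with hu_def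
  have hu_cont : ContinuousOn u (Set.Icc a b) :=
    Complex.continuous_exp.comp_continuousOn
      (continuousOn_const.mul (Complex.continuous_ofReal.comp_continuousOn hΦ.continuousOn))
  have hu_norm : ∀ x, ‖u x‖ = 1 := by
    intro x
    rw [hu_def]
    simp [Complex.norm_exp]
  have hud : ∀ x ∈ Set.Ioo a b, HasDerivAt u (Complex.I * (g x) * u x) x := by
    intro x hx
    have h1 : HasDerivAt (fun y => Complex.I * (Φ y : ℂ)) (Complex.I * g x) x :=
      ((hΦd x hx).ofReal_comp).const_mul Complex.I
    simpa [hu_def, mul_comm] using h1.cexp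
  set P : ℝ → ℂ := fun x => -Complex.I * (h x : ℂ) * u x with hP_def
  have hP_cont : ContinuousOn P (Set.Icc a b) :=
    (continuousOn_const.mul (Complex.continuous_ofReal.comp_continuousOn hh_cont)).mul hu_cont
  have hP_norm : ∀ x ∈ Set.Icc a b, ‖P x‖ ≤ γ⁻¹ := by
    intro x hx
    rw [hP_def]
    simp only [norm_mul, norm_neg, Complex.norm_I, one_mul, Complex.norm_real, hu_norm, mul_one]
    simpa using hh_bound x hx
  set Q : ℝ → ℂ := fun x => -Complex.I * (H' x : ℂ) * u x + u x with hQ_def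
  have hQ_cont : ContinuousOn Q (Set.Icc a b) :=
    ((continuousOn_const.mul (Complex.continuous_ofReal.comp_continuousOn hH'_cont)).mul
      hu_cont).add hu_cont
  have hPd : ∀ x ∈ Set.Ioo a b, HasDerivAt P (Q x) x := by
    intro x hx
    have p1 : HasDerivAt (fun y => -Complex.I * (h y : ℂ)) (-Complex.I * (H' x : ℂ)) x :=
      ((hhd x hx).ofReal_comp).const_mul (-Complex.I)
    have h2 := p1.mul (hud x hx)
    have hhg : h x * g x = 1 := inv_mul_cancel₀ (hg_ne x (Ioo_subset_Icc_self hx))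
    have key : -Complex.I * (h x : ℂ) * (Complex.I * (g x : ℂ) * u x) = u x := by
      have e1 : -Complex.I * (h x : ℂ) * (Complex.I * (g x : ℂ) * u x)
          = -(Complex.I * Complex.I) * (((h x * g x : ℝ)) : ℂ) * u x := by
        push_cast; ring
      rw [e1, Complex.I_mul_I, hhg]
      push_cast; ring
    rw [hQ_def]
    exact h2.congr_deriv (by simp only [key])
  set R : ℝ → ℂ := fun x => Complex.I * (H' x : ℂ) * u x with hR_def
  have hR_cont : ContinuousOn R (Set.Icc a b) :=
    (continuousOn_const.mul (Complex.continuous_ofReal.comp_continuousOn hH'_cont)).mul hu_cont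
  have hFbound : ∀ t ∈ Set.Icc a b, ‖∫ x in a..t, u x‖ ≤ 4 * γ⁻¹ := by
    intro t ht
    have hat : a ≤ t := ht.1
    have hsub : Set.Icc a t ⊆ Set.Icc a b := Icc_subset_Icc le_rfl ht.2
    have hQint : IntervalIntegrable Q MeasureTheory.volume a t := by
      apply ContinuousOn.intervalIntegrable
      rw [uIcc_of_le hat]; exact hQ_cont.mono hsub
    have hRint : IntervalIntegrable R MeasureTheory.volume a t := by
      apply ContinuousOn.intervalIntegrable
      rw [uIcc_of_le hat]; exact hR_cont.mono hsub
    have hFTC : (∫ x in a..t, Q x) = P t - P a :=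
      integral_eq_sub_of_hasDerivAt_of_le hat (hP_cont.mono hsub)
        (fun x hx => hPd x ⟨hx.1, lt_of_lt_of_le hx.2 ht.2⟩) hQint
    have hsplitfun : ∀ x, u x = Q x + R x := by
      intro x
      rw [hQ_def, hR_def]; ring
    have hsplit : (∫ x in a..t, u x) = (∫ x in a..t, Q x) + ∫ x in a..t, R x := by
      rw [← intervalIntegral.integral_add hQint hRint]
      exact intervalIntegral.integral_congr fun x _ => hsplitfun x
    rw [hsplit]
    have hb1 : ‖(∫ x in a..t, Q x)‖ ≤ 2 * γ⁻¹ := by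
      rw [hFTC]
      calc ‖P t - P a‖ ≤ ‖P t‖ + ‖P a‖ := norm_sub_le _ _
        _ ≤ γ⁻¹ + γ⁻¹ := add_le_add (hP_norm t ht) (hP_norm a (left_mem_Icc.2 hab.le))
        _ = 2 * γ⁻¹ := by ring
    have hb2 : ‖(∫ x in a..t, R x)‖ ≤ 2 * γ⁻¹ := by
      calc ‖(∫ x in a..t, R x)‖ ≤ ∫ x in a..t, ‖R x‖ :=
            intervalIntegral.norm_integral_le_integral_norm hat
        _ = ∫ x in a..t, |H' x| := by
            apply intervalIntegral.integral_congr
            intro x _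
            rw [hR_def]
            simp [norm_mul, Complex.norm_real, hu_norm]
        _ ≤ 2 * γ⁻¹ := hvar t ht
    calc ‖(∫ x in a..t, Q x) + ∫ x in a..t, R x‖
        ≤ ‖(∫ x in a..t, Q x)‖ + ‖(∫ x in a..t, R x)‖ := norm_add_le _ _
      _ ≤ 2 * γ⁻¹ + 2 * γ⁻¹ := add_le_add hb1 hb2
      _ = 4 * γ⁻¹ := by ring
  -- the primitive F
  set F : ℝ → ℂ := fun t => ∫ x in a..t, u x with hF_def
  have huint : MeasureTheory.IntegrableOn u (Set.uIcc a b) MeasureTheory.volume := by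
    rw [uIcc_of_le hab.le]
    exact hu_cont.integrableOn_Icc
  have hF_cont : ContinuousOn F (Set.Icc a b) := by
    have := intervalIntegral.continuousOn_primitive_interval huint
    rwa [uIcc_of_le hab.le] at this
  have hFa : F a = 0 := intervalIntegral.integral_same
  have hFd : ∀ x ∈ Set.Ioo a b, HasDerivAt F (u x) x := by
    intro x hx
    have hcx : ContinuousAt u x := hu_cont.continuousAt (Icc_mem_nhds hx.1 hx.2)
    have hmeas := (hu_cont.mono Set.Ioo_subset_Icc_self).stronglyMeasurableAtFilter
      (μ := MeasureTheory.volume) isOpen_Ioo x hx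
    have hint : IntervalIntegrable u MeasureTheory.volume a x := by
      apply ContinuousOn.intervalIntegrable
      rw [uIcc_of_le hx.1.le]
      exact hu_cont.mono (Icc_subset_Icc le_rfl hx.2.le)
    exact intervalIntegral.integral_hasDerivAt_right hint hmeas hcx
  -- derivative of ψ within the interval
  set ψ' : ℝ → ℂ := derivWithin ψ (Set.Icc a b) with hψ'_def
  have hψ'_smooth : ContDiffOn ℝ (⊤ : ℕ∞) ψ' (Set.Icc a b) := hψ.derivWithin huniq (by simp)
  have hψ'_cont : ContinuousOn ψ' (Set.Icc a b) := hψ'_smooth.continuousOn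
  have hψd : ∀ x ∈ Set.Ioo a b, HasDerivAt ψ (ψ' x) x := by
    intro x hx
    exact ((hψ.differentiableOn (by simp) x (Ioo_subset_Icc_self hx)).hasDerivWithinAt).hasDerivAt
      (Icc_mem_nhds hx.1 hx.2)
  -- integration by parts for the main integral
  set G : ℝ → ℂ := fun x => u x * ψ x + F x * ψ' x with hG_def
  have hG_cont : ContinuousOn G (Set.Icc a b) :=
    (hu_cont.mul hψ.continuousOn).add (hF_cont.mul hψ'_cont)
  have hGd : ∀ x ∈ Set.Ioo a b, HasDerivAt (fun y => F y * ψ y) (G x) x := by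
    intro x hx
    have := (hFd x hx).mul (hψd x hx)
    exact this.congr_deriv rfl
  have hGint : IntervalIntegrable G MeasureTheory.volume a b := by
    apply ContinuousOn.intervalIntegrable
    rw [uIcc_of_le hab.le]; exact hG_cont
  have huψint : IntervalIntegrable (fun x => u x * ψ x) MeasureTheory.volume a b := by
    apply ContinuousOn.intervalIntegrable
    rw [uIcc_of_le hab.le]; exact hu_cont.mul hψ.continuousOn
  have hFψ'int : IntervalIntegrable (fun x => F x * ψ' x) MeasureTheory.volume a b := by
    apply ContinuousOn.intervalIntegrable
    rw [uIcc_of_le hab.le]; exact hF_cont.mul hψ'_cont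
  have hFTC2 : (∫ x in a..b, G x) = F b * ψ b - F a * ψ a :=
    integral_eq_sub_of_hasDerivAt_of_le hab.le (hF_cont.mul hψ.continuousOn) hGd hGint
  have hmain : (∫ x in a..b, u x * ψ x) = F b * ψ b - ∫ x in a..b, F x * ψ' x := by
    have hadd : (∫ x in a..b, G x)
        = (∫ x in a..b, u x * ψ x) + ∫ x in a..b, F x * ψ' x := by
      rw [hG_def]
      exact intervalIntegral.integral_add huψint hFψ'int
    rw [hadd, hFa, zero_mul, sub_zero] at hFTC2
    linear_combination hFTC2
  -- norms
  have hγinv : (0:ℝ) ≤ γ⁻¹ := (inv_pos.2 hγ).le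
  have hbound2 : (∫ x in a..b, ‖F x * ψ' x‖) ≤ 4 * γ⁻¹ * ∫ x in a..b, ‖ψ' x‖ := by
    rw [← intervalIntegral.integral_const_mul]
    apply intervalIntegral.integral_mono_on hab.le
    · apply ContinuousOn.intervalIntegrable
      rw [uIcc_of_le hab.le]; exact (hF_cont.mul hψ'_cont).norm
    · apply ContinuousOn.intervalIntegrable
      rw [uIcc_of_le hab.le]; exact continuousOn_const.mul hψ'_cont.norm
    · intro x hx
      rw [norm_mul]
      exact mul_le_mul_of_nonneg_right (hFbound x hx) (norm_nonneg _)
  have hψ'eq : (∫ x in a..b, ‖deriv ψ x‖) = ∫ x in a..b, ‖ψ' x‖ := by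
    apply intervalIntegral.integral_congr_ae
    have hnet : ∀ᵐ (x : ℝ), x ≠ b := by
      rw [MeasureTheory.ae_iff]
      simp [Set.setOf_eq_eq_singleton]
    filter_upwards [hnet] with x hx hxI
    rw [uIoc_of_le hab.le] at hxI
    have hxO : x ∈ Set.Ioo a b := ⟨hxI.1, lt_of_le_of_ne hxI.2 hx⟩
    rw [(hψd x hxO).deriv]
  calc ‖∫ x in a..b, Complex.exp (Complex.I * (Φ x : ℂ)) * ψ x‖
      = ‖F b * ψ b - ∫ x in a..b, F x * ψ' x‖ := by rw [← hmain]
    _ ≤ ‖F b * ψ b‖ + ‖∫ x in a..b, F x * ψ' x‖ := norm_sub_le _ _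
    _ ≤ 4 * γ⁻¹ * ‖ψ b‖ + ∫ x in a..b, ‖F x * ψ' x‖ := by
        apply add_le_add
        · rw [norm_mul]
          exact mul_le_mul_of_nonneg_right (hFbound b (right_mem_Icc.2 hab.le)) (norm_nonneg _)
        · exact intervalIntegral.norm_integral_le_integral_norm hab.le
    _ ≤ 4 * γ⁻¹ * ‖ψ b‖ + 4 * γ⁻¹ * ∫ x in a..b, ‖ψ' x‖ := by
        exact add_le_add le_rfl hbound2
    _ = 4 * γ⁻¹ * (‖ψ b‖ + ∫ x in a..b, ‖deriv ψ x‖) := by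
        rw [hψ'eq]; ring
end

section
/- Van der Corput lemma (second derivative version): Let I = [a,b], Φ : I → ℝ smooth with |Φ''(x)| ≥ γ > 0 on I, and ψ : I → ℂ smooth. Then |∫_a^b e^{iΦ(x)} ψ(x) dx| ≤ C γ^{-1/2} (|ψ(b)| + ∫_a^b |ψ'(x)| dx) for an absolute constant C. -/
open Set intervalIntegral MeasureTheory Complex

/-- Sign constancy: a continuous function bounded away from zero has constant sign. -/
lemma vdc_sign {h : ℝ → ℝ} {c d γ : ℝ} (hcd : c ≤ d) (hγ : 0 < γ)
    (hc : ContinuousOn h (Set.Icc c d)) (hlb : ∀ x ∈ Set.Icc c d, γ ≤ |h x|) :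
    (∀ x ∈ Set.Icc c d, γ ≤ h x) ∨ (∀ x ∈ Set.Icc c d, h x ≤ -γ) := by
  have hcmem : c ∈ Set.Icc c d := ⟨le_refl c, hcd⟩
  have habs : ∀ x ∈ Set.Icc c d, γ ≤ h x ∨ h x ≤ -γ := by
    intro x hx
    rcases abs_cases (h x) with ⟨h1, _⟩ | ⟨h1, _⟩
    · left; linarith [hlb x hx]
    · right; linarith [hlb x hx]
  rcases habs c hcmem with h0 | h0
  · left
    intro x hx
    rcases habs x hx with h1 | h1
    · exact h1
    · exfalso
      have hsub : Set.Icc c x ⊆ Set.Icc c d := Set.Icc_subset_Icc le_rfl hx.2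
      have : (0:ℝ) ∈ h '' Set.Icc c x := by
        apply intermediate_value_Icc' hx.1 (hc.mono hsub)
        constructor <;> linarith
      obtain ⟨z, hz, hz0⟩ := this
      have := hlb z (hsub hz)
      rw [hz0] at this
      simp at this; linarith
  · right
    intro x hx
    rcases habs x hx with h1 | h1
    · exfalso
      have hsub : Set.Icc c x ⊆ Set.Icc c d := Set.Icc_subset_Icc le_rfl hx.2
      have : (0:ℝ) ∈ h '' Set.Icc c x := by
        apply intermediate_value_Icc hx.1 (hc.mono hsub)
        constructor <;> linarith
      obtain ⟨z, hz, hz0⟩ := this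
      have := hlb z (hsub hz)
      rw [hz0] at this
      simp at this; linarith
    · exact h1

/-- Van der Corput first-derivative estimate with monotone phase derivative. -/
lemma vdc_phase_bound {Φ g g' : ℝ → ℝ} {c d lam : ℝ} (hcd : c ≤ d) (hlam : 0 < lam)
    (hΦ : ∀ x ∈ Set.Icc c d, HasDerivAt Φ (g x) x)
    (hg : ∀ x ∈ Set.Icc c d, HasDerivAt g (g' x) x)
    (hg'c : ContinuousOn g' (Set.Icc c d))
    (hg'0 : ∀ x ∈ Set.Icc c d, 0 ≤ g' x)
    (hlb : ∀ x ∈ Set.Icc c d, lam ≤ |g x|) :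
    ‖∫ x in c..d, Complex.exp (Complex.I * (Φ x : ℂ))‖ ≤ 3 / lam := by
  have hu : Set.uIcc c d = Set.Icc c d := Set.uIcc_of_le hcd
  have hgne : ∀ x ∈ Set.Icc c d, g x ≠ 0 := by
    intro x hx h0
    have := hlb x hx; rw [h0] at this; simp at this; linarith
  have hgc : ContinuousOn g (Set.Icc c d) := fun x hx =>
    (hg x hx).continuousAt.continuousWithinAt
  have hΦc : ContinuousOn Φ (Set.Icc c d) := fun x hx =>
    (hΦ x hx).continuousAt.continuousWithinAt
  -- the functions
  set u : ℝ → ℂ := fun x => Complex.exp (Complex.I * (Φ x : ℂ)) with hudef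
  set u' : ℝ → ℂ := fun x => Complex.exp (Complex.I * (Φ x : ℂ)) * (Complex.I * (g x : ℂ)) with hu'def
  set v : ℝ → ℂ := fun x => (Complex.I * (g x : ℂ))⁻¹ with hvdef
  set v' : ℝ → ℂ := fun x => -(Complex.I * (g' x : ℂ)) / (Complex.I * (g x : ℂ)) ^ 2 with hv'def
  have hIg : ∀ x ∈ Set.Icc c d, Complex.I * (g x : ℂ) ≠ 0 := by
    intro x hx
    exact mul_ne_zero Complex.I_ne_zero (Complex.ofReal_ne_zero.mpr (hgne x hx))
  have hud : ∀ x ∈ Set.Icc c d, HasDerivAt u (u' x) x := by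
    intro x hx
    exact ((hΦ x hx).ofReal_comp.const_mul Complex.I).cexp
  have hvd : ∀ x ∈ Set.Icc c d, HasDerivAt v (v' x) x := by
    intro x hx
    have h1 : HasDerivAt (fun y => Complex.I * ((g y : ℝ) : ℂ)) (Complex.I * (g' x : ℂ)) x :=
      (hg x hx).ofReal_comp.const_mul Complex.I
    have h4 := (hasDerivAt_inv (hIg x hx)).comp x h1
    have h5 : v' x = -((Complex.I * ((g x : ℝ) : ℂ)) ^ 2)⁻¹ * (Complex.I * ((g' x : ℝ) : ℂ)) := by
      simp only [hv'def]
      field_simp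
    exact h5 ▸ h4
  -- continuity facts
  have hIgc : ContinuousOn (fun x => Complex.I * (g x : ℂ)) (Set.Icc c d) :=
    continuousOn_const.mul (Complex.continuous_ofReal.comp_continuousOn hgc)
  have huc : ContinuousOn u (Set.Icc c d) :=
    Complex.continuous_exp.comp_continuousOn
      (continuousOn_const.mul (Complex.continuous_ofReal.comp_continuousOn hΦc))
  have hu'c : ContinuousOn u' (Set.Icc c d) := huc.mul hIgc
  have hv'c : ContinuousOn v' (Set.Icc c d) := by
    apply ContinuousOn.div
    · exact (continuousOn_const.mul (Complex.continuous_ofReal.comp_continuousOn hg'c)).neg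
    · exact hIgc.pow 2
    · intro x hx
      exact pow_ne_zero 2 (hIg x hx)
  have hu'int : IntervalIntegrable u' volume c d := (hu ▸ hu'c).intervalIntegrable
  have hv'int : IntervalIntegrable v' volume c d := (hu ▸ hv'c).intervalIntegrable
  -- integration by parts
  have hibp : ∫ x in c..d, v x * u' x
      = v d * u d - v c * u c - ∫ x in c..d, v' x * u x := by
    apply integral_mul_deriv_eq_deriv_mul (fun x hx => hvd x (hu ▸ hx))
      (fun x hx => hud x (hu ▸ hx)) hv'int hu'int
  have heq : ∫ x in c..d, Complex.exp (Complex.I * (Φ x : ℂ)) = ∫ x in c..d, v x * u' x := by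
    apply integral_congr
    intro x hx
    rw [hu] at hx
    show Complex.exp (Complex.I * (Φ x : ℂ)) = (Complex.I * (g x : ℂ))⁻¹ *
        (Complex.exp (Complex.I * (Φ x : ℂ)) * (Complex.I * (g x : ℂ)))
    rw [mul_comm (Complex.exp _) (Complex.I * _), ← mul_assoc,
      inv_mul_cancel₀ (hIg x hx), one_mul]
  -- norm bounds
  have hnormu : ∀ x, ‖u x‖ = 1 := by
    intro x
    simp [hudef, Complex.norm_exp]
  have hnormv : ∀ x ∈ Set.Icc c d, ‖v x‖ ≤ 1 / lam := by
    intro x hx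
    have : ‖v x‖ = |g x|⁻¹ := by
      simp [hvdef, map_mul, Complex.norm_I, Complex.norm_real]
    rw [this, inv_eq_one_div]
    apply div_le_div_of_nonneg_left one_pos.le hlam (hlb x hx) |>.trans_eq rfl
  -- the variation integral
  have hftc : ∫ x in c..d, g' x / g x ^ 2 = (g c)⁻¹ - (g d)⁻¹ := by
    have hder : ∀ x ∈ Set.uIcc c d, HasDerivAt (fun y => -(g y)⁻¹) (g' x / g x ^ 2) x := by
      intro x hx
      rw [hu] at hx
      have := ((hg x hx).inv (hgne x hx)).neg
      rw [neg_div, neg_neg] at this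
      exact this
    have hint : IntervalIntegrable (fun x => g' x / g x ^ 2) volume c d := by
      apply ContinuousOn.intervalIntegrable
      rw [hu]
      exact hg'c.div (hgc.pow 2) (fun x hx => pow_ne_zero 2 (hgne x hx))
    have := integral_eq_sub_of_hasDerivAt hder hint
    rw [this]; ring
  have hvar_nonneg : 0 ≤ ∫ x in c..d, g' x / g x ^ 2 := by
    apply intervalIntegral.integral_nonneg hcd
    intro x hx
    exact div_nonneg (hg'0 x hx) (sq_nonneg _)
  have hvar_le : (g c)⁻¹ - (g d)⁻¹ ≤ 1 / lam := by
    have hcm : c ∈ Set.Icc c d := ⟨le_rfl, hcd⟩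
    have hdm : d ∈ Set.Icc c d := ⟨hcd, le_rfl⟩
    have hgcabs := hlb c hcm
    have hgdabs := hlb d hdm
    -- exclude g c > 0 and g d < 0
    have hexcl : ¬(0 < g c ∧ g d < 0) := by
      rintro ⟨h1, h2⟩
      have : (0:ℝ) ∈ g '' Set.Icc c d := by
        apply intermediate_value_Icc' hcd hgc
        constructor <;> linarith
      obtain ⟨z, hz, hz0⟩ := this
      exact hgne z hz hz0
    rcases abs_cases (g c) with ⟨e1, e2⟩ | ⟨e1, e2⟩ <;>
      rcases abs_cases (g d) with ⟨f1, f2⟩ | ⟨f1, f2⟩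
    · -- g c ≥ λ, g d ≥ λ
      have h1 : (g c)⁻¹ ≤ 1 / lam := by
        rw [inv_eq_one_div]
        apply div_le_div_of_nonneg_left one_pos.le hlam (by linarith)
      have h2 : 0 < (g d)⁻¹ := inv_pos.mpr (by linarith)
      linarith
    · exact absurd ⟨by linarith, by linarith⟩ hexcl
    · -- g c ≤ -λ, g d ≥ λ
      have h1 : (g c)⁻¹ < 0 := inv_neg''.mpr (by linarith)
      have h2 : 0 < (g d)⁻¹ := inv_pos.mpr (by linarith)
      linarith
    · -- both ≤ -λ
      have h1 : (g c)⁻¹ < 0 := inv_neg''.mpr (by linarith)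
      have h2 : -(1/lam) ≤ (g d)⁻¹ := by
        have hgd : g d ≤ -lam := by linarith
        have h3 : (g d)⁻¹ = -(-(g d))⁻¹ := by field_simp
        rw [h3]
        have h4 : (-(g d))⁻¹ ≤ 1 / lam := by
          rw [inv_eq_one_div]
          apply div_le_div_of_nonneg_left one_pos.le hlam (by linarith)
        linarith
      linarith
  -- put everything together
  have hlast : ‖∫ x in c..d, v' x * u x‖ ≤ 1 / lam := by
    calc ‖∫ x in c..d, v' x * u x‖ ≤ ∫ x in c..d, ‖v' x * u x‖ :=
          intervalIntegral.norm_integral_le_integral_norm hcd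
      _ = ∫ x in c..d, g' x / g x ^ 2 := by
          apply integral_congr
          intro x hx
          rw [hu] at hx
          show ‖v' x * u x‖ = g' x / g x ^ 2
          rw [norm_mul, hnormu, mul_one]
          simp only [hv'def]
          rw [norm_div, norm_neg, norm_mul, norm_pow, norm_mul]
          simp only [Complex.norm_I, Complex.norm_real, Real.norm_eq_abs, one_mul]
          rw [_root_.abs_of_nonneg (hg'0 x hx), _root_.sq_abs]
      _ ≤ 1 / lam := by rw [hftc]; exact hvar_le
  have hcm : c ∈ Set.Icc c d := ⟨le_rfl, hcd⟩
  have hdm : d ∈ Set.Icc c d := ⟨hcd, le_rfl⟩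
  calc ‖∫ x in c..d, Complex.exp (Complex.I * (Φ x : ℂ))‖
      = ‖v d * u d - v c * u c - ∫ x in c..d, v' x * u x‖ := by rw [heq, hibp]
    _ ≤ ‖v d * u d - v c * u c‖ + ‖∫ x in c..d, v' x * u x‖ := norm_sub_le _ _
    _ ≤ ‖v d * u d‖ + ‖v c * u c‖ + ‖∫ x in c..d, v' x * u x‖ := by
        have := norm_sub_le (v d * u d) (v c * u c); linarith
    _ ≤ 1 / lam + 1 / lam + 1 / lam := by
        have h1 : ‖v d * u d‖ ≤ 1 / lam := by
          rw [norm_mul, hnormu, mul_one]; exact hnormv d hdm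
        have h2 : ‖v c * u c‖ ≤ 1 / lam := by
          rw [norm_mul, hnormu, mul_one]; exact hnormv c hcm
        linarith
    _ = 3 / lam := by ring

/-- Van der Corput second-derivative estimate, positive second derivative case. -/
lemma vdc_key_pos {Φ g g' : ℝ → ℝ} {c d γ : ℝ} (hcd : c ≤ d) (hγ : 0 < γ)
    (hΦ : ∀ x ∈ Set.Icc c d, HasDerivAt Φ (g x) x)
    (hg : ∀ x ∈ Set.Icc c d, HasDerivAt g (g' x) x)
    (hg'c : ContinuousOn g' (Set.Icc c d))
    (hlb : ∀ x ∈ Set.Icc c d, γ ≤ g' x) :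
    ‖∫ x in c..d, Complex.exp (Complex.I * (Φ x : ℂ))‖ ≤ 8 / Real.sqrt γ := by
  set lam := Real.sqrt γ with hlamdef
  have hlam : 0 < lam := Real.sqrt_pos.mpr hγ
  have hlamsq : lam * lam = γ := Real.mul_self_sqrt hγ.le
  have hgc : ContinuousOn g (Set.Icc c d) := fun x hx =>
    (hg x hx).continuousAt.continuousWithinAt
  have hΦc : ContinuousOn Φ (Set.Icc c d) := fun x hx =>
    (hΦ x hx).continuousAt.continuousWithinAt
  have hEc : ContinuousOn (fun x => Complex.exp (Complex.I * (Φ x : ℂ))) (Set.Icc c d) :=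
    Complex.continuous_exp.comp_continuousOn
      (continuousOn_const.mul (Complex.continuous_ofReal.comp_continuousOn hΦc))
  -- quantitative growth of g
  have hgrow : ∀ p q, p ∈ Set.Icc c d → q ∈ Set.Icc c d → p ≤ q → γ * (q - p) ≤ g q - g p := by
    intro p q hp hq hpq
    have hsub : Set.Icc p q ⊆ Set.Icc c d := Set.Icc_subset_Icc hp.1 hq.2
    have hupq : Set.uIcc p q = Set.Icc p q := Set.uIcc_of_le hpq
    have hftc : ∫ x in p..q, g' x = g q - g p := by
      apply integral_eq_sub_of_hasDerivAt
      · intro x hx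
        exact hg x (hsub (hupq ▸ hx))
      · apply ContinuousOn.intervalIntegrable
        rw [hupq]
        exact hg'c.mono hsub
    have hmono : ∫ x in p..q, γ ≤ ∫ x in p..q, g' x := by
      apply intervalIntegral.integral_mono_on hpq
      · exact intervalIntegrable_const
      · apply ContinuousOn.intervalIntegrable
        rw [hupq]
        exact hg'c.mono hsub
      · intro x hx
        exact hlb x (hsub hx)
    rw [hftc] at hmono
    calc γ * (q - p) = (q - p) • γ := by rw [smul_eq_mul]; ring
      _ = ∫ x in p..q, γ := (intervalIntegral.integral_const γ).symm
      _ ≤ g q - g p := hmono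
  have hgmono : ∀ p q, p ∈ Set.Icc c d → q ∈ Set.Icc c d → p ≤ q → g p ≤ g q := by
    intro p q hp hq hpq
    have := hgrow p q hp hq hpq
    nlinarith
  -- first-derivative bound on subintervals
  have hA : ∀ p q, p ∈ Set.Icc c d → q ∈ Set.Icc c d → p ≤ q →
      (∀ x ∈ Set.Icc p q, lam ≤ |g x|) →
      ‖∫ x in p..q, Complex.exp (Complex.I * (Φ x : ℂ))‖ ≤ 3 / lam := by
    intro p q hp hq hpq habs
    have hsub : Set.Icc p q ⊆ Set.Icc c d := Set.Icc_subset_Icc hp.1 hq.2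
    exact vdc_phase_bound hpq hlam (fun x hx => hΦ x (hsub hx)) (fun x hx => hg x (hsub hx))
      (hg'c.mono hsub) (fun x hx => le_of_lt (lt_of_lt_of_le hγ (hlb x (hsub hx)))) habs
  -- integrability of the oscillatory factor on subintervals
  have hEint : ∀ p q, p ∈ Set.Icc c d → q ∈ Set.Icc c d → p ≤ q →
      IntervalIntegrable (fun x => Complex.exp (Complex.I * (Φ x : ℂ))) volume p q := by
    intro p q hp hq hpq
    apply ContinuousOn.intervalIntegrable
    rw [Set.uIcc_of_le hpq]
    exact hEc.mono (Set.Icc_subset_Icc hp.1 hq.2)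
  have hcm : c ∈ Set.Icc c d := ⟨le_rfl, hcd⟩
  have hdm : d ∈ Set.Icc c d := ⟨hcd, le_rfl⟩
  have h38 : 3 / lam ≤ 8 / lam := by
    rw [div_le_div_iff₀ hlam hlam]; nlinarith
  by_cases hc1 : lam ≤ g c
  · -- g ≥ lam everywhere
    refine (hA c d hcm hdm hcd ?_).trans h38
    intro x hx
    have := hgmono c x hcm hx hx.1
    rw [abs_of_pos (by linarith)]
    linarith
  by_cases hd1 : g d ≤ -lam
  · -- g ≤ -lam everywhere
    refine (hA c d hcm hdm hcd ?_).trans h38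
    intro x hx
    have := hgmono x d hx hdm hx.2
    rw [abs_of_neg (by linarith)]
    linarith
  push_neg at hc1 hd1
  -- construct p
  obtain ⟨p, hpm, hgp_ge, hgp_lt, hleft⟩ :
      ∃ p ∈ Set.Icc c d, -lam ≤ g p ∧ g p < lam ∧
        ‖∫ x in c..p, Complex.exp (Complex.I * (Φ x : ℂ))‖ ≤ 3 / lam := by
    by_cases hgc1 : -lam ≤ g c
    · exact ⟨c, hcm, hgc1, hc1, by simp [intervalIntegral.integral_same]; positivity⟩
    · push_neg at hgc1
      obtain ⟨p, hp, hgp⟩ : ∃ p ∈ Set.Icc c d, g p = -lam := by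
        have : -lam ∈ Set.Icc (g c) (g d) := ⟨hgc1.le, hd1.le⟩
        obtain ⟨p, hp, hgp⟩ := intermediate_value_Icc hcd hgc this
        exact ⟨p, hp, hgp⟩
      refine ⟨p, hp, hgp.ge, by rw [hgp]; linarith, ?_⟩
      apply hA c p hcm hp hp.1
      intro x hx
      have hxm : x ∈ Set.Icc c d := Set.Icc_subset_Icc le_rfl hp.2 hx
      have := hgmono x p hxm hp hx.2
      rw [hgp] at this
      rw [abs_of_neg (by linarith)]
      linarith
  -- construct q
  obtain ⟨q, hqm, hpq, hgq_le, hright⟩ :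
      ∃ q ∈ Set.Icc c d, p ≤ q ∧ g q ≤ lam ∧
        ‖∫ x in q..d, Complex.exp (Complex.I * (Φ x : ℂ))‖ ≤ 3 / lam := by
    by_cases hgd1 : g d ≤ lam
    · exact ⟨d, hdm, hpm.2, hgd1, by simp [intervalIntegral.integral_same]; positivity⟩
    · push_neg at hgd1
      obtain ⟨q, hq, hgq⟩ : ∃ q ∈ Set.Icc p d, g q = lam := by
        have hgcont : ContinuousOn g (Set.Icc p d) := hgc.mono (Set.Icc_subset_Icc hpm.1 le_rfl)
        have : lam ∈ Set.Icc (g p) (g d) := ⟨hgp_lt.le, hgd1.le⟩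
        obtain ⟨q, hq, hgq⟩ := intermediate_value_Icc hpm.2 hgcont this
        exact ⟨q, hq, hgq⟩
      have hqm : q ∈ Set.Icc c d := ⟨hpm.1.trans hq.1, hq.2⟩
      refine ⟨q, hqm, hq.1, hgq.le, ?_⟩
      apply hA q d hqm hdm hq.2
      intro x hx
      have hxm : x ∈ Set.Icc c d := Set.Icc_subset_Icc hqm.1 le_rfl hx
      have := hgmono q x hqm hxm hx.1
      rw [hgq] at this
      rw [abs_of_pos (by linarith)]
      linarith
  -- middle piece
  have hqp : q - p ≤ 2 * lam / γ := by
    have h := hgrow p q hpm hqm hpq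
    rw [le_div_iff₀ hγ]
    nlinarith
  have hmid : ‖∫ x in p..q, Complex.exp (Complex.I * (Φ x : ℂ))‖ ≤ 2 / lam := by
    calc ‖∫ x in p..q, Complex.exp (Complex.I * (Φ x : ℂ))‖
        ≤ ∫ x in p..q, ‖Complex.exp (Complex.I * (Φ x : ℂ))‖ :=
          intervalIntegral.norm_integral_le_integral_norm hpq
      _ = ∫ x in p..q, (1:ℝ) := by
          apply integral_congr
          intro x _
          simp [Complex.norm_exp]
      _ = q - p := by simp
      _ ≤ 2 * lam / γ := hqp
      _ = 2 / lam := by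
          rw [← hlamsq]
          field_simp
  -- combine
  have hsplit : ∫ x in c..d, Complex.exp (Complex.I * (Φ x : ℂ))
      = (∫ x in c..p, Complex.exp (Complex.I * (Φ x : ℂ)))
        + (∫ x in p..q, Complex.exp (Complex.I * (Φ x : ℂ)))
        + (∫ x in q..d, Complex.exp (Complex.I * (Φ x : ℂ))) := by
    have i1 := hEint c p hcm hpm hpm.1
    have i2 := hEint p q hpm hqm hpq
    have i3 := hEint q d hqm hdm hqm.2
    rw [integral_add_adjacent_intervals i1 i2, integral_add_adjacent_intervals (i1.trans i2) i3]
  calc ‖∫ x in c..d, Complex.exp (Complex.I * (Φ x : ℂ))‖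
      ≤ 3 / lam + 2 / lam + 3 / lam := by
        rw [hsplit]
        have t1 := norm_add_le ((∫ x in c..p, Complex.exp (Complex.I * (Φ x : ℂ)))
          + (∫ x in p..q, Complex.exp (Complex.I * (Φ x : ℂ))))
          (∫ x in q..d, Complex.exp (Complex.I * (Φ x : ℂ)))
        have t2 := norm_add_le (∫ x in c..p, Complex.exp (Complex.I * (Φ x : ℂ)))
          (∫ x in p..q, Complex.exp (Complex.I * (Φ x : ℂ)))
        linarith
    _ = 8 / lam := by ring

/-- Van der Corput second-derivative estimate. -/
lemma vdc_key {Φ g g' : ℝ → ℝ} {c d γ : ℝ} (hcd : c ≤ d) (hγ : 0 < γ)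
    (hΦ : ∀ x ∈ Set.Icc c d, HasDerivAt Φ (g x) x)
    (hg : ∀ x ∈ Set.Icc c d, HasDerivAt g (g' x) x)
    (hg'c : ContinuousOn g' (Set.Icc c d))
    (hlb : ∀ x ∈ Set.Icc c d, γ ≤ |g' x|) :
    ‖∫ x in c..d, Complex.exp (Complex.I * (Φ x : ℂ))‖ ≤ 8 / Real.sqrt γ := by
  rcases vdc_sign hcd hγ hg'c hlb with hpos | hneg
  · exact vdc_key_pos hcd hγ hΦ hg hg'c hpos
  · -- apply the positive case to -Φ
    have hres := vdc_key_pos (Φ := fun x => -Φ x) (g := fun x => -g x) (g' := fun x => -g' x)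
      hcd hγ (fun x hx => (hΦ x hx).neg) (fun x hx => (hg x hx).neg) hg'c.neg
      (fun x hx => by simpa using neg_le_neg (hneg x hx))
    have hconj : ∀ x : ℝ, Complex.exp (Complex.I * ((Φ x : ℝ) : ℂ))
        = (starRingEnd ℂ) (Complex.exp (Complex.I * ((-Φ x : ℝ) : ℂ))) := by
      intro x
      rw [← Complex.exp_conj]
      congr 1
      simp [Complex.ext_iff]
    have hint : ∫ x in c..d, Complex.exp (Complex.I * ((Φ x : ℝ) : ℂ))
        = (starRingEnd ℂ) (∫ x in c..d, Complex.exp (Complex.I * ((-Φ x : ℝ) : ℂ))) := by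
      rw [show (fun x => Complex.exp (Complex.I * ((Φ x : ℝ) : ℂ)))
          = fun x => (starRingEnd ℂ) (Complex.exp (Complex.I * ((-Φ x : ℝ) : ℂ))) from funext hconj]
      simp only [intervalIntegral, ← integral_conj, map_sub]
    rw [hint, RCLike.norm_conj]
    exact hres

theorem van_der_corput_second_derivative :
    ∃ C : ℝ, 0 < C ∧ ∀ (a b : ℝ), a < b → ∀ (Φ : ℝ → ℝ) (ψ : ℝ → ℂ) (γ : ℝ),
      0 < γ →
      ContDiffOn ℝ (⊤ : ℕ∞) Φ (Set.Icc a b) →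
      ContDiffOn ℝ (⊤ : ℕ∞) ψ (Set.Icc a b) →
      (∀ x ∈ Set.Icc a b, γ ≤ |deriv (deriv Φ) x|) →
      ‖∫ x in a..b, Complex.exp (Complex.I * (Φ x : ℂ)) * ψ x‖ ≤
        C * γ ^ (-(1 : ℝ) / 2) * (‖ψ b‖ + ∫ x in a..b, ‖deriv ψ x‖) := by
  refine ⟨8, by norm_num, ?_⟩
  intro a b hab Φ ψ γ hγ hΦ hψ hcurv
  have ho : IsOpen (Set.Ioo a b) := isOpen_Ioo
  have hsub : Set.Ioo a b ⊆ Set.Icc a b := Set.Ioo_subset_Icc_self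
  have hΦoo : ContDiffOn ℝ (⊤ : ℕ∞) Φ (Set.Ioo a b) := hΦ.mono hsub
  have hψoo : ContDiffOn ℝ (⊤ : ℕ∞) ψ (Set.Ioo a b) := hψ.mono hsub
  have hΦd : ∀ x ∈ Set.Ioo a b, HasDerivAt Φ (deriv Φ x) x := fun x hx =>
    ((hΦoo.contDiffAt (ho.mem_nhds hx)).differentiableAt (by simp)).hasDerivAt
  have hΦ'oo : ContDiffOn ℝ (⊤ : ℕ∞) (deriv Φ) (Set.Ioo a b) := hΦoo.deriv_of_isOpen (m := (⊤ : ℕ∞)) ho (by simp)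
  have hΦ'd : ∀ x ∈ Set.Ioo a b, HasDerivAt (deriv Φ) (deriv (deriv Φ) x) x := fun x hx =>
    ((hΦ'oo.contDiffAt (ho.mem_nhds hx)).differentiableAt (by simp)).hasDerivAt
  have hΦ''c : ContinuousOn (deriv (deriv Φ)) (Set.Ioo a b) :=
    (hΦ'oo.deriv_of_isOpen (m := (⊤ : ℕ∞)) ho (by simp)).continuousOn
  have hψd : ∀ x ∈ Set.Ioo a b, HasDerivAt ψ (deriv ψ x) x := fun x hx =>
    ((hψoo.contDiffAt (ho.mem_nhds hx)).differentiableAt (by simp)).hasDerivAt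
  have hψ'c : ContinuousOn (deriv ψ) (Set.Ioo a b) :=
    (hψoo.deriv_of_isOpen (m := (⊤ : ℕ∞)) ho (by simp)).continuousOn
  have hΦc : ContinuousOn Φ (Set.Icc a b) := hΦ.continuousOn
  have hψc : ContinuousOn ψ (Set.Icc a b) := hψ.continuousOn
  have hEc : ContinuousOn (fun x => Complex.exp (Complex.I * (Φ x : ℂ))) (Set.Icc a b) :=
    Complex.continuous_exp.comp_continuousOn
      (continuousOn_const.mul (Complex.continuous_ofReal.comp_continuousOn hΦc))
  have hEoo : ContinuousOn (fun x => Complex.exp (Complex.I * (Φ x : ℂ))) (Set.Ioo a b) :=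
    hEc.mono hsub
  have hEnorm : ∀ x : ℝ, ‖Complex.exp (Complex.I * (Φ x : ℂ))‖ = 1 := by
    intro x
    simp [Complex.norm_exp]
  have hh₀c : ContinuousOn (fun x => Complex.exp (Complex.I * (Φ x : ℂ)) * ψ x) (Set.Icc a b) :=
    hEc.mul hψc
  -- integrability of deriv ψ on [a, b]
  have hwc : ContinuousOn (derivWithin ψ (Set.Icc a b)) (Set.Icc a b) :=
    (hψ.derivWithin (m := (⊤ : ℕ∞)) (uniqueDiffOn_Icc hab) (by simp)).continuousOn
  have heqw : Set.EqOn (derivWithin ψ (Set.Icc a b)) (deriv ψ) (Set.Ioo a b) := fun x hx =>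
    derivWithin_of_mem_nhds (Icc_mem_nhds hx.1 hx.2)
  have hintd : IntervalIntegrable (deriv ψ) volume a b := by
    rw [intervalIntegrable_iff, Set.uIoc_of_le hab.le, integrableOn_Ioc_iff_integrableOn_Ioo]
    exact IntegrableOn.congr_fun ((hwc.integrableOn_Icc).mono_set hsub) heqw measurableSet_Ioo
  have hInorm_nonneg : 0 ≤ ∫ x in a..b, ‖deriv ψ x‖ :=
    intervalIntegral.integral_nonneg hab.le (fun x _ => norm_nonneg _)
  have hK0 : (0:ℝ) ≤ 8 / Real.sqrt γ := by positivity
  set K : ℝ := 8 / Real.sqrt γ with hKdef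
  set M : ℝ := ‖ψ b‖ + ∫ x in a..b, ‖deriv ψ x‖ with hMdef
  have hM0 : 0 ≤ M := add_nonneg (norm_nonneg _) hInorm_nonneg
  obtain ⟨B, hB⟩ := isCompact_Icc.exists_bound_of_continuousOn hψc
  have hB0 : 0 ≤ B := (norm_nonneg _).trans (hB a ⟨le_rfl, hab.le⟩)
  -- main estimate on interior subintervals
  have hkey : ∀ c d, a < c → c ≤ d → d < b →
      ‖∫ x in c..d, Complex.exp (Complex.I * (Φ x : ℂ)) * ψ x‖ ≤ K * M := by
    intro c d hac hcd hdb
    have hIccIoo : Set.Icc c d ⊆ Set.Ioo a b := fun x hx =>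
      ⟨hac.trans_le hx.1, hx.2.trans_lt hdb⟩
    have hIccIcc : Set.Icc c d ⊆ Set.Icc a b := hIccIoo.trans hsub
    have hucd : Set.uIcc c d = Set.Icc c d := Set.uIcc_of_le hcd
    have huab : Set.uIcc a b = Set.Icc a b := Set.uIcc_of_le hab.le
    set F : ℝ → ℂ := fun y => ∫ t in c..y, Complex.exp (Complex.I * (Φ t : ℂ)) with hFdef
    have hFd : ∀ x ∈ Set.Icc c d, HasDerivAt F (Complex.exp (Complex.I * (Φ x : ℂ))) x := by
      intro x hx
      apply intervalIntegral.integral_hasDerivAt_right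
      · apply ContinuousOn.intervalIntegrable
        rw [Set.uIcc_of_le hx.1]
        exact hEc.mono ((Set.Icc_subset_Icc le_rfl hx.2).trans hIccIcc)
      · exact ContinuousOn.stronglyMeasurableAtFilter ho hEoo x (hIccIoo hx)
      · exact hEoo.continuousAt (ho.mem_nhds (hIccIoo hx))
    have hFb : ∀ x ∈ Set.Icc c d, ‖F x‖ ≤ K := by
      intro x hx
      apply vdc_key (γ := γ) hx.1 hγ
      · intro t ht
        exact hΦd t (hIccIoo ⟨ht.1, ht.2.trans hx.2⟩)
      · intro t ht
        exact hΦ'd t (hIccIoo ⟨ht.1, ht.2.trans hx.2⟩)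
      · exact hΦ''c.mono (fun t ht => hIccIoo ⟨ht.1, ht.2.trans hx.2⟩)
      · intro t ht
        exact hcurv t (hsub (hIccIoo ⟨ht.1, ht.2.trans hx.2⟩))
    have hFc : ContinuousOn F (Set.Icc c d) := fun x hx =>
      (hFd x hx).continuousAt.continuousWithinAt
    have hψ'cd : ContinuousOn (deriv ψ) (Set.Icc c d) := hψ'c.mono hIccIoo
    have hintd_cd : IntervalIntegrable (deriv ψ) volume c d := by
      apply hintd.mono_set
      rw [hucd, huab]
      exact hIccIcc
    have hEint_cd : IntervalIntegrable (fun x => Complex.exp (Complex.I * (Φ x : ℂ))) volume c d := by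
      apply ContinuousOn.intervalIntegrable
      rw [hucd]
      exact hEc.mono hIccIcc
    have hibp := integral_mul_deriv_eq_deriv_mul
      (u := F) (u' := fun x => Complex.exp (Complex.I * (Φ x : ℂ)))
      (v := ψ) (v' := deriv ψ)
      (fun x hx => hFd x (hucd ▸ hx))
      (fun x hx => hψd x (hIccIoo (hucd ▸ hx)))
      hEint_cd hintd_cd
    have hFc0 : F c = 0 := intervalIntegral.integral_same
    have heq2 : ∫ x in c..d, Complex.exp (Complex.I * (Φ x : ℂ)) * ψ x
        = F d * ψ d - ∫ x in c..d, F x * deriv ψ x := by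
      rw [hibp, hFc0]
      ring
    have htail : ‖∫ x in c..d, F x * deriv ψ x‖ ≤ K * ∫ x in c..d, ‖deriv ψ x‖ := by
      calc ‖∫ x in c..d, F x * deriv ψ x‖ ≤ ∫ x in c..d, ‖F x * deriv ψ x‖ :=
            intervalIntegral.norm_integral_le_integral_norm hcd
        _ ≤ ∫ x in c..d, K * ‖deriv ψ x‖ := by
            apply intervalIntegral.integral_mono_on hcd
            · apply ContinuousOn.intervalIntegrable
              rw [hucd]
              exact (hFc.mul hψ'cd).norm
            · exact hintd_cd.norm.const_mul K
            · intro x hx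
              rw [norm_mul]
              exact mul_le_mul_of_nonneg_right (hFb x hx) (norm_nonneg _)
        _ = K * ∫ x in c..d, ‖deriv ψ x‖ := by
            rw [← intervalIntegral.integral_const_mul]
    have hψdb : ‖ψ d‖ ≤ ‖ψ b‖ + ∫ x in d..b, ‖deriv ψ x‖ := by
      have hadb : a ≤ d := (hac.trans_le hcd).le
      have hftc2 : ∫ x in d..b, deriv ψ x = ψ b - ψ d := by
        apply integral_eq_sub_of_hasDeriv_right_of_le hdb.le
          (hψc.mono (Set.Icc_subset_Icc hadb le_rfl))
        · intro x hx
          exact (hψd x ⟨(hac.trans_le hcd).trans hx.1, hx.2⟩).hasDerivWithinAt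
        · apply hintd.mono_set
          rw [Set.uIcc_of_le hdb.le, huab]
          exact Set.Icc_subset_Icc hadb le_rfl
      have : ψ d = ψ b - ∫ x in d..b, deriv ψ x := by rw [hftc2]; ring
      rw [this]
      calc ‖ψ b - ∫ x in d..b, deriv ψ x‖ ≤ ‖ψ b‖ + ‖∫ x in d..b, deriv ψ x‖ := norm_sub_le _ _
        _ ≤ ‖ψ b‖ + ∫ x in d..b, ‖deriv ψ x‖ := by
            have := intervalIntegral.norm_integral_le_integral_norm
              (f := deriv ψ) (μ := volume) hdb.le
            linarith
    -- sum of the norms of deriv ψ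
    have hni : ∀ p q : ℝ, a ≤ p → p ≤ q → q ≤ b →
        IntervalIntegrable (fun x => ‖deriv ψ x‖) volume p q := by
      intro p q hp hpq hq
      apply hintd.norm.mono_set
      rw [Set.uIcc_of_le hpq, huab]
      exact Set.Icc_subset_Icc hp hq
    have hadb : a ≤ d := (hac.trans_le hcd).le
    have hsum1 : (∫ x in c..d, ‖deriv ψ x‖) + ∫ x in d..b, ‖deriv ψ x‖
        = ∫ x in c..b, ‖deriv ψ x‖ :=
      integral_add_adjacent_intervals (hni c d hac.le hcd hdb.le) (hni d b hadb hdb.le le_rfl)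
    have hsum2 : (∫ x in a..c, ‖deriv ψ x‖) + ∫ x in c..b, ‖deriv ψ x‖
        = ∫ x in a..b, ‖deriv ψ x‖ :=
      integral_add_adjacent_intervals (hni a c le_rfl hac.le (hcd.trans hdb.le))
        (hni c b hac.le (hcd.trans hdb.le) le_rfl)
    have hpos_ac : 0 ≤ ∫ x in a..c, ‖deriv ψ x‖ :=
      intervalIntegral.integral_nonneg hac.le (fun x _ => norm_nonneg _)
    have hbound : ‖ψ d‖ + ∫ x in c..d, ‖deriv ψ x‖ ≤ M := by
      rw [hMdef]
      have h1 := hψdb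
      have : (∫ x in c..d, ‖deriv ψ x‖) + ∫ x in d..b, ‖deriv ψ x‖
          ≤ ∫ x in a..b, ‖deriv ψ x‖ := by
        rw [hsum1, ← hsum2]
        linarith
      linarith
    calc ‖∫ x in c..d, Complex.exp (Complex.I * (Φ x : ℂ)) * ψ x‖
        = ‖F d * ψ d - ∫ x in c..d, F x * deriv ψ x‖ := by rw [heq2]
      _ ≤ ‖F d * ψ d‖ + ‖∫ x in c..d, F x * deriv ψ x‖ := norm_sub_le _ _
      _ ≤ K * ‖ψ d‖ + K * ∫ x in c..d, ‖deriv ψ x‖ := by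
          have h1 : ‖F d * ψ d‖ ≤ K * ‖ψ d‖ := by
            rw [norm_mul]
            exact mul_le_mul_of_nonneg_right (hFb d ⟨hcd, le_rfl⟩) (norm_nonneg _)
          linarith
      _ = K * (‖ψ d‖ + ∫ x in c..d, ‖deriv ψ x‖) := by ring
      _ ≤ K * M := mul_le_mul_of_nonneg_left hbound hK0
  -- pass to the limit
  have hfin : ‖∫ x in a..b, Complex.exp (Complex.I * (Φ x : ℂ)) * ψ x‖ ≤ K * M := by
    apply le_of_forall_pos_le_add
    intro ε hε
    set δ : ℝ := min ((b - a) / 2) (ε / (2 * (B + 1))) with hδdef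
    have hδpos : 0 < δ := lt_min (by linarith) (by positivity)
    have hδ1 : δ ≤ (b - a) / 2 := min_le_left _ _
    have hδ2 : δ ≤ ε / (2 * (B + 1)) := min_le_right _ _
    set c : ℝ := a + δ with hcdef
    set d : ℝ := b - δ with hddef
    have hac : a < c := by simp [hcdef]; linarith
    have hdb : d < b := by simp [hddef]; linarith
    have hcd : c ≤ d := by simp [hcdef, hddef]; linarith
    have hint_piece : ∀ p q : ℝ, a ≤ p → p ≤ q → q ≤ b →
        IntervalIntegrable (fun x => Complex.exp (Complex.I * (Φ x : ℂ)) * ψ x) volume p q := by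
      intro p q hp hpq hq
      apply ContinuousOn.intervalIntegrable
      rw [Set.uIcc_of_le hpq]
      exact hh₀c.mono (Set.Icc_subset_Icc hp hq)
    have hsplit : ∫ x in a..b, Complex.exp (Complex.I * (Φ x : ℂ)) * ψ x
        = (∫ x in a..c, Complex.exp (Complex.I * (Φ x : ℂ)) * ψ x)
          + (∫ x in c..d, Complex.exp (Complex.I * (Φ x : ℂ)) * ψ x)
          + (∫ x in d..b, Complex.exp (Complex.I * (Φ x : ℂ)) * ψ x) := by
      have i1 := hint_piece a c le_rfl hac.le (hcd.trans hdb.le)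
      have i2 := hint_piece c d hac.le hcd hdb.le
      have i3 := hint_piece d b (hac.le.trans hcd) hdb.le le_rfl
      rw [integral_add_adjacent_intervals i1 i2, integral_add_adjacent_intervals (i1.trans i2) i3]
    have hedge : ∀ p q : ℝ, a ≤ p → p ≤ q → q ≤ b →
        ‖∫ x in p..q, Complex.exp (Complex.I * (Φ x : ℂ)) * ψ x‖ ≤ B * (q - p) := by
      intro p q hp hpq hq
      calc ‖∫ x in p..q, Complex.exp (Complex.I * (Φ x : ℂ)) * ψ x‖
          ≤ ∫ x in p..q, ‖Complex.exp (Complex.I * (Φ x : ℂ)) * ψ x‖ :=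
            intervalIntegral.norm_integral_le_integral_norm hpq
        _ ≤ ∫ x in p..q, B := by
            apply intervalIntegral.integral_mono_on hpq
            · apply ContinuousOn.intervalIntegrable
              rw [Set.uIcc_of_le hpq]
              exact (hh₀c.mono (Set.Icc_subset_Icc hp hq)).norm
            · exact intervalIntegrable_const
            · intro x hx
              rw [norm_mul, hEnorm, one_mul]
              exact hB x (Set.Icc_subset_Icc hp hq hx)
        _ = B * (q - p) := by rw [intervalIntegral.integral_const, smul_eq_mul]; ring
    have h1 := hedge a c le_rfl hac.le (hcd.trans hdb.le)
    have h2 := hedge d b (hac.le.trans hcd) hdb.le le_rfl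
    have h3 := hkey c d hac hcd hdb
    have hca : c - a = δ := by simp [hcdef]
    have hbd : b - d = δ := by simp [hddef]
    rw [hca] at h1
    rw [hbd] at h2
    have hεb : B * δ + B * δ ≤ ε := by
      have : (2 * (B + 1)) * δ ≤ ε := by
        rw [← le_div_iff₀' (by positivity)]
        exact hδ2
      nlinarith
    calc ‖∫ x in a..b, Complex.exp (Complex.I * (Φ x : ℂ)) * ψ x‖
        ≤ B * δ + K * M + B * δ := by
          rw [hsplit]
          have t1 := norm_add_le ((∫ x in a..c, Complex.exp (Complex.I * (Φ x : ℂ)) * ψ x)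
            + (∫ x in c..d, Complex.exp (Complex.I * (Φ x : ℂ)) * ψ x))
            (∫ x in d..b, Complex.exp (Complex.I * (Φ x : ℂ)) * ψ x)
          have t2 := norm_add_le (∫ x in a..c, Complex.exp (Complex.I * (Φ x : ℂ)) * ψ x)
            (∫ x in c..d, Complex.exp (Complex.I * (Φ x : ℂ)) * ψ x)
          linarith
      _ ≤ K * M + ε := by linarith
  -- convert the constant
  have hrpow : γ ^ (-(1:ℝ) / 2) = (Real.sqrt γ)⁻¹ := by
    rw [Real.sqrt_eq_rpow, ← Real.rpow_neg hγ.le]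
    norm_num
  calc ‖∫ x in a..b, Complex.exp (Complex.I * (Φ x : ℂ)) * ψ x‖ ≤ K * M := hfin
    _ = 8 * γ ^ (-(1:ℝ) / 2) * M := by
        rw [hrpow, hKdef, div_eq_mul_inv]
    _ = 8 * γ ^ (-(1:ℝ) / 2) * (‖ψ b‖ + ∫ x in a..b, ‖deriv ψ x‖) := by rw [hMdef]
end

section
/- Low-frequency smallness of the Boussinesq evolution of a wave packet: with f_v as above (supp f_v ⊂ (-v,v)), if 0 < v < min{v₀, δ/4}, 0 < t < 1 and δ/2 < x < δ, then |B_t f_v(x)| ≤ C t v^{-4}, where B_t f_v(x) = ∫ e^{ixξ} e^{it|ξ|√(1+ξ²)} f̂_v(ξ) dξ. -/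
open scoped FourierTransform
open MeasureTheory Real

/-!
Substituting `u = vξ + 1/v` turns the integral into
`∫ e^{2πi x (u - 1/v)/v} e^{iθ(u)} g(u) du`. With `e^{iθ}` replaced by `1` this is
`e^{-2πi x/v²} 𝓕⁻g(x/v)`, which vanishes since `x/v > 2` lies outside the support of `𝓕⁻g`.
What remains is bounded using `|e^{iθ} - 1| ≤ |θ|` and
`|θ(u)| ≤ t (1 + v)⁴ (1 + |u|)² / v⁴`, a weight that is integrable against `|g|`.
-/

open scoped SchwartzMap

theorem SchwartzMap.integrable_one_add_norm_pow_mul {D V : Type*} [NormedAddCommGroup D]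
    [NormedSpace ℝ D] [NormedAddCommGroup V] [NormedSpace ℝ V] [MeasurableSpace D]
    [BorelSpace D] [SecondCountableTopology D] (μ : Measure D) [μ.HasTemperateGrowth]
    (f : 𝓢(D, V)) (k : ℕ) :
    Integrable (fun x ↦ (1 + ‖x‖) ^ k * ‖f x‖) μ := by
  refine (((f.integrable_pow_mul μ 0).add (f.integrable_pow_mul μ k)).const_mul
    (2 ^ (k - 1))).mono' (by fun_prop) (Filter.Eventually.of_forall fun x ↦ ?_)
  have h := add_pow_le zero_le_one (norm_nonneg x) k
  rw [norm_mul, norm_norm, Real.norm_of_nonneg (by positivity)]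
  simp only [Pi.add_apply, pow_zero, one_pow, one_mul] at h ⊢
  nlinarith [norm_nonneg (f x)]

theorem abs_mul_sqrt_one_add_sq_le (a : ℝ) : |a| * √(1 + a ^ 2) ≤ (1 + |a|) ^ 2 := by
  have : √(1 + a ^ 2) ≤ 1 + |a| :=
    Real.sqrt_le_iff.mpr ⟨by positivity, by nlinarith [sq_abs a, abs_nonneg a]⟩
  nlinarith [abs_nonneg a]

theorem one_add_abs_sub_one_div_div_le {v : ℝ} (hv : 0 < v) (u : ℝ) :
    1 + |(u - 1 / v) / v| ≤ (1 + v) ^ 2 * (1 + |u|) / v ^ 2 := by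
  have h : |u - 1 / v| ≤ |u| + 1 / v := by
    simpa [abs_of_pos hv] using abs_sub u (1 / v)
  rw [abs_div, abs_of_pos hv, le_div_iff₀ (by positivity)]
  have : v * |u - 1 / v| ≤ v * |u| + 1 := by
    calc v * |u - 1 / v| ≤ v * (|u| + 1 / v) := by gcongr
      _ = v * |u| + 1 := by field_simp
  have e : (1 + |u - 1 / v| / v) * v ^ 2 = v ^ 2 + v * |u - 1 / v| := by field_simp
  rw [e]
  nlinarith [abs_nonneg u, mul_nonneg hv.le (abs_nonneg u)]

theorem integral_mul_ofReal_mul_comp_mul_add {v : ℝ} (hv : 0 < v) (b : ℝ) (F g : ℝ → ℂ) :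
    ∫ ξ, F ξ * ((v : ℂ) * g (v * ξ + b)) = ∫ u, F ((u - b) / v) * g u := by
  set H : ℝ → ℂ := fun u ↦ (v : ℂ) * (F ((u - b) / v) * g u)
  calc ∫ ξ, F ξ * ((v : ℂ) * g (v * ξ + b)) = ∫ ξ, H (v * ξ + b) := by
        congr 1; ext ξ
        simp only [H, add_sub_cancel_right, mul_div_cancel_left₀ _ hv.ne']
        ring
    _ = |v⁻¹| • ∫ u, H (u + b) := Measure.integral_comp_mul_left (fun u ↦ H (u + b)) v
    _ = |v⁻¹| • ∫ u, H u := by rw [integral_add_right_eq_self]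
    _ = ∫ u, F ((u - b) / v) * g u := by
        rw [integral_const_mul, abs_of_pos (inv_pos.mpr hv), Complex.real_smul, ← mul_assoc]
        push_cast
        rw [inv_mul_cancel₀ (by exact_mod_cast hv.ne'), one_mul]

theorem integral_exp_mul_sub_div_mul_eq_fourierInv (g : ℝ → ℂ) (x v b : ℝ) :
    ∫ u, Complex.exp (2 * π * Complex.I * ((x * ((u - b) / v) : ℝ) : ℂ)) * g u =
      Complex.exp (-(2 * π * Complex.I * ((x * b / v : ℝ) : ℂ))) * 𝓕⁻ g (x / v) := by
  rw [Real.fourierInv_eq', ← integral_const_mul]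
  congr 1; ext u
  rw [smul_eq_mul, ← mul_assoc, ← Complex.exp_add, real_inner_eq_re_inner, RCLike.inner_apply]
  congr 2
  simp only [conj_trivial, RCLike.re_to_real]
  push_cast
  ring

theorem abs_mul_abs_mul_sqrt_one_add_sq_comp_le {t v : ℝ} (ht : 0 ≤ t) (hv : 0 < v) (u : ℝ) :
    |t * |(u - 1 / v) / v| * √(1 + ((u - 1 / v) / v) ^ 2)| ≤
      t * (1 + v) ^ 4 / v ^ 4 * (1 + |u|) ^ 2 := by
  set ξ := (u - 1 / v) / v
  rw [abs_of_nonneg (by positivity), mul_assoc]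
  calc t * (|ξ| * √(1 + ξ ^ 2)) ≤ t * (1 + |ξ|) ^ 2 := by
        gcongr; exact abs_mul_sqrt_one_add_sq_le ξ
    _ ≤ t * ((1 + v) ^ 2 * (1 + |u|) / v ^ 2) ^ 2 := by
        gcongr; exact one_add_abs_sub_one_div_div_le hv u
    _ = t * (1 + v) ^ 4 / v ^ 4 * (1 + |u|) ^ 2 := by ring

theorem norm_integral_exp_mul_exp_mul_le {g : ℝ → ℂ} (hg : Integrable g) {θ w : ℝ → ℝ}
    (hθ : Measurable θ) (hθw : ∀ u, |θ u| ≤ w u) (hw : Integrable fun u ↦ w u * ‖g u‖)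
    {x v b : ℝ} (hx : 𝓕⁻ g (x / v) = 0) :
    ‖∫ u, Complex.exp (2 * π * Complex.I * ((x * ((u - b) / v) : ℝ) : ℂ)) *
        Complex.exp (Complex.I * (θ u : ℂ)) * g u‖ ≤ ∫ u, w u * ‖g u‖ := by
  set e : ℝ → ℂ := fun u ↦ Complex.exp (2 * π * Complex.I * ((x * ((u - b) / v) : ℝ) : ℂ))
  have he : ∀ u, ‖e u‖ = 1 := fun u ↦ by
    rw [show e u = Complex.exp (((2 * π * (x * ((u - b) / v)) : ℝ) : ℂ) * Complex.I) by
      simp only [e]; push_cast; ring_nf]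
    exact Complex.norm_exp_ofReal_mul_I _
  have he_meas : Measurable e := by fun_prop
  have hbound : ∀ u, ‖e u * (Complex.exp (Complex.I * (θ u : ℂ)) - 1) * g u‖ ≤ w u * ‖g u‖ :=
    fun u ↦ by
      rw [norm_mul, norm_mul, he, one_mul]
      gcongr
      exact norm_exp_I_mul_ofReal_sub_one_le.trans (hθw u)
  have hrest : Integrable fun u ↦ e u * (Complex.exp (Complex.I * (θ u : ℂ)) - 1) * g u :=
    hw.mono' (by fun_prop) (Filter.Eventually.of_forall hbound)
  have hmain : Integrable fun u ↦ e u * g u :=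
    hg.bdd_mul (c := 1) he_meas.aestronglyMeasurable
      (Filter.Eventually.of_forall fun u ↦ (he u).le)
  have hvanish : ∫ u, e u * g u = 0 := by
    rw [integral_exp_mul_sub_div_mul_eq_fourierInv, hx, mul_zero]
  calc ‖∫ u, e u * Complex.exp (Complex.I * (θ u : ℂ)) * g u‖
      = ‖(∫ u, e u * g u) + ∫ u, e u * (Complex.exp (Complex.I * (θ u : ℂ)) - 1) * g u‖ := by
        rw [← integral_add hmain hrest]
        congr 2; ext u; ring
    _ = ‖∫ u, e u * (Complex.exp (Complex.I * (θ u : ℂ)) - 1) * g u‖ := by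
        rw [hvanish, zero_add]
    _ ≤ ∫ u, w u * ‖g u‖ := norm_integral_le_of_norm_le hw (Filter.Eventually.of_forall hbound)

theorem wave_packet_low_frequency_bound_general (g : SchwartzMap ℝ ℂ)
    (hg : Function.support (𝓕⁻ (g : ℝ → ℂ)) ⊆ Set.Ioo (-1) 1)
    (v₀ δ : ℝ) :
    ∃ C : ℝ, 0 < C ∧ ∀ v t x : ℝ,
      0 < v → v < min v₀ (δ / 4) → 0 < t → t < 1 → δ / 2 < x → x < δ →
      ‖∫ ξ : ℝ, Complex.exp (2 * π * Complex.I * ((x * ξ : ℝ) : ℂ)) *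
          Complex.exp (Complex.I * ((t * |ξ| * Real.sqrt (1 + ξ ^ 2) : ℝ) : ℂ)) *
          ((v : ℂ) * g (v * ξ + 1 / v))‖ ≤ C * t / v ^ 4 := by
  set K := ∫ u, (1 + |u|) ^ 2 * ‖g u‖
  have hK : 0 ≤ K := integral_nonneg fun u ↦ by positivity
  have hK_int : Integrable fun u : ℝ ↦ (1 + |u|) ^ 2 * ‖g u‖ :=
    g.integrable_one_add_norm_pow_mul volume 2
  refine ⟨(1 + v₀) ^ 4 * K + 1, by positivity, fun v t x hv hvm ht _ hx _ ↦ ?_⟩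
  have hv₀ : v < v₀ := hvm.trans_le (min_le_left _ _)
  have hxv : 𝓕⁻ (g : ℝ → ℂ) (x / v) = 0 := by
    refine Function.notMem_support.mp fun h ↦ (hg h).2.not_ge ?_
    rw [le_div_iff₀ hv]
    linarith [hvm.trans_le (min_le_right _ _)]
  rw [integral_mul_ofReal_mul_comp_mul_add hv (1 / v)]
  calc _ ≤ ∫ u, t * (1 + v) ^ 4 / v ^ 4 * (1 + |u|) ^ 2 * ‖g u‖ :=
        norm_integral_exp_mul_exp_mul_le g.integrable (by fun_prop)
          (abs_mul_abs_mul_sqrt_one_add_sq_comp_le ht.le hv)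
          (by simpa only [mul_assoc] using hK_int.const_mul _) hxv
    _ = t * (1 + v) ^ 4 / v ^ 4 * K := by
        simp only [mul_assoc]; exact integral_const_mul _ _
    _ ≤ ((1 + v₀) ^ 4 * K + 1) * t / v ^ 4 := by
        have : (1 + v) ^ 4 ≤ (1 + v₀) ^ 4 := by gcongr
        rw [div_mul_eq_mul_div, div_le_div_iff_of_pos_right (by positivity)]
        nlinarith [mul_le_mul_of_nonneg_right this hK]

/-- Low-frequency smallness: for the wave packet `f_v` (with
`f̂_v ξ = v g(vξ + 1/v)` and `supp f_v ⊂ (-v,v)`), on the test interval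
`δ/2 < x < δ` one has `|B_t f_v(x)| ≤ C t v⁻⁴`. -/
theorem wave_packet_low_frequency_bound (g : SchwartzMap ℝ ℂ)
    (hg : Function.support (𝓕⁻ (g : ℝ → ℂ)) ⊆ Set.Ioo (-1) 1)
    (v₀ δ : ℝ) (hv₀ : 0 < v₀) (hδ : 0 < δ) :
    ∃ C : ℝ, 0 < C ∧ ∀ v t x : ℝ,
      0 < v → v < min v₀ (δ / 4) → 0 < t → t < 1 → δ / 2 < x → x < δ →
      ‖∫ ξ : ℝ, Complex.exp (2 * π * Complex.I * ((x * ξ : ℝ) : ℂ)) *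
          Complex.exp (Complex.I * ((t * |ξ| * Real.sqrt (1 + ξ ^ 2) : ℝ) : ℂ)) *
          ((v : ℂ) * g (v * ξ + 1 / v))‖ ≤ C * t / v ^ 4 :=
  wave_packet_low_frequency_bound_general g hg v₀ δ
end

section
/- Lower bound forcing the weight exponent: let n ≥ 1, s > 0, q ≥ 1 and α > -n, and suppose the weighted maximal estimate (∫_{ℝⁿ} |sup_{t∈ℝ} B_t f(x)|^q |x|^α dx)^{1/q} ≤ C ‖f‖_{Ḣ^s(ℝⁿ)} holds for all radial Schwartz f. Then α = q(n/2 − s) − n. -/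
open scoped FourierTransform RealInnerProductSpace ContDiff Pointwise SchwartzMap
open MeasureTheory Real

/-!
Test the estimate on the dilates `f_l x = φ (l • x)` of a radial bump `φ` equal to `1` on the
unit ball. Since `𝓕 f_l ξ = l⁻ⁿ 𝓕 φ (l⁻¹ • ξ)`, the right-hand side equals
`C ‖φ‖_{Ḣˢ} l ^ (s - n / 2)`. On the left, already the time `t = 0` gives, by Fourier inversion,
`sup_t |B_t f_l x| ≥ (2π)⁻ⁿ` for `‖x‖ ≤ 2π / l`; integrating over the annulus
`π / l < ‖x‖ < 2π / l` bounds the left-hand side below by `c l ^ (-(α + n) / q)`. An inequality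
`A l ^ a ≤ B l ^ b` valid for all `l > 0` forces `a = b`.
-/

lemma eq_of_forall_mul_rpow_le {A B a b : ℝ} (hA : 0 < A)
    (h : ∀ l : ℝ, 0 < l → A * l ^ a ≤ B * l ^ b) : a = b := by
  have hAB : A ≤ B := by simpa using h 1 one_pos
  by_contra hab
  have hbase : 0 < B / A + 1 := by have := div_nonneg (hA.le.trans hAB) hA.le; linarith
  -- a scale at which `l ^ (a - b)` exceeds `B / A`
  set l := (B / A + 1) ^ (a - b)⁻¹
  have hl : 0 < l := rpow_pos_of_pos hbase _
  have hla : l ^ (a - b) = B / A + 1 := by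
    rw [← rpow_mul hbase.le, inv_mul_cancel₀ (sub_ne_zero.mpr hab), rpow_one]
  have hsplit : A * l ^ a = (B + A) * l ^ b := by
    rw [← sub_add_cancel a b, rpow_add hl, hla]
    field_simp
  nlinarith [h l hl, rpow_pos_of_pos hl b]

lemma mul_measure_le_lintegral_of_forall_mem {X : Type*} [MeasurableSpace X] {μ : Measure X}
    {s : Set X} (hs : MeasurableSet s) {c : ENNReal} {f : X → ENNReal}
    (h : ∀ x ∈ s, c ≤ f x) : c * μ s ≤ ∫⁻ x, f x ∂μ :=
  calc c * μ s = ∫⁻ _ in s, c ∂μ := (setLIntegral_const s c).symm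
    _ ≤ ∫⁻ x in s, f x ∂μ := setLIntegral_mono' hs h
    _ ≤ ∫⁻ x, f x ∂μ := setLIntegral_le_lintegral s f

section Annulus

variable {V : Type*} [NormedAddCommGroup V]

def dyadicAnnulus (r : ℝ) : Set V := Metric.ball 0 r \ Metric.closedBall 0 (r / 2)

lemma mul_rpow_le_rpow_norm_of_mem_dyadicAnnulus {r : ℝ} (hr : 0 < r) (α : ℝ) {x : V}
    (hx : x ∈ dyadicAnnulus r) : min 1 (2⁻¹ ^ α) * r ^ α ≤ ‖x‖ ^ α := by
  obtain ⟨hlt, hgt⟩ := hx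
  rw [mem_ball_zero_iff] at hlt
  rw [Metric.mem_closedBall, dist_zero_right, not_le] at hgt
  rcases le_or_gt 0 α with hα | hα
  · calc min 1 (2⁻¹ ^ α) * r ^ α ≤ 2⁻¹ ^ α * r ^ α := by gcongr; exact min_le_right _ _
      _ = (r / 2) ^ α := by rw [← mul_rpow (by norm_num) hr.le, inv_mul_eq_div]
      _ ≤ ‖x‖ ^ α := by gcongr
  · calc min 1 (2⁻¹ ^ α) * r ^ α ≤ 1 * r ^ α := by gcongr; exact min_le_left _ _
      _ = r ^ α := one_mul _
      _ ≤ ‖x‖ ^ α := rpow_le_rpow_of_nonpos (by linarith) hlt.le hα.le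

lemma addHaar_dyadicAnnulus_one_pos [NormedSpace ℝ V] [Nontrivial V] [MeasurableSpace V]
    (μ : Measure V) [μ.IsOpenPosMeasure] : 0 < μ (dyadicAnnulus 1) := by
  obtain ⟨x, hx⟩ := exists_norm_eq V (show (0 : ℝ) ≤ 3 / 4 by norm_num)
  refine pos_iff_ne_zero.mpr
    ((Metric.isOpen_ball.sdiff Metric.isClosed_closedBall).measure_ne_zero μ ⟨x, ?_, ?_⟩)
  · rw [mem_ball_zero_iff, hx]; norm_num
  · rw [Metric.mem_closedBall, dist_zero_right, hx]; norm_num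

lemma addHaar_dyadicAnnulus_lt_top [ProperSpace V] [MeasurableSpace V] (μ : Measure V)
    [IsFiniteMeasureOnCompacts μ] (r : ℝ) : μ (dyadicAnnulus r) < ⊤ :=
  (measure_mono Set.sdiff_subset).trans_lt measure_ball_lt_top

variable [NormedSpace ℝ V]

lemma smul_dyadicAnnulus_one {r : ℝ} (hr : 0 < r) :
    r • (dyadicAnnulus 1 : Set V) = dyadicAnnulus r := by
  rw [dyadicAnnulus, Set.smul_set_sdiff₀ hr.ne', smul_ball hr.ne',
    smul_closedBall _ _ (by norm_num), smul_zero, Real.norm_of_nonneg hr.le, mul_one,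
    dyadicAnnulus, mul_one_div]

lemma addHaar_dyadicAnnulus [MeasurableSpace V] [BorelSpace V] [FiniteDimensional ℝ V]
    (μ : Measure V) [μ.IsAddHaarMeasure] {r : ℝ} (hr : 0 < r) :
    μ (dyadicAnnulus r) = ENNReal.ofReal (r ^ Module.finrank ℝ V) * μ (dyadicAnnulus 1) := by
  rw [← smul_dyadicAnnulus_one hr, Measure.addHaar_smul, abs_of_pos (by positivity)]

end Annulus

section Bump

variable {V : Type*} [NormedAddCommGroup V]

noncomputable def radialBump (x : V) : ℝ := smoothTransition ((4 - ‖x‖ ^ 2) / 3)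

lemma radialBump_of_norm_le_one {x : V} (hx : ‖x‖ ≤ 1) : radialBump x = 1 :=
  smoothTransition.one_of_one_le (by nlinarith [norm_nonneg x])

lemma radialBump_of_two_le_norm {x : V} (hx : 2 ≤ ‖x‖) : radialBump x = 0 :=
  smoothTransition.zero_of_nonpos (by nlinarith)

lemma hasCompactSupport_radialBump [ProperSpace V] : HasCompactSupport (radialBump (V := V)) :=
  HasCompactSupport.intro (isCompact_closedBall 0 2) fun x hx ↦
    radialBump_of_two_le_norm (by simpa using hx : 2 < ‖x‖).le

variable [InnerProductSpace ℝ V]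

lemma contDiff_radialBump : ContDiff ℝ ∞ (radialBump (V := V)) :=
  smoothTransition.contDiff.comp ((contDiff_const.sub (contDiff_norm_sq ℝ)).div_const 3)

variable [FiniteDimensional ℝ V]

noncomputable def dilatedBump (l : ℝ) (hl : l ≠ 0) : 𝓢(V, ℂ) :=
  HasCompactSupport.toSchwartzMap (f := fun x ↦ (radialBump (l • x) : ℂ))
    ((hasCompactSupport_radialBump.comp_smul hl).comp_left Complex.ofReal_zero)
    (Complex.ofRealCLM.contDiff.comp (contDiff_radialBump.comp (contDiff_const_smul l)))

lemma dilatedBump_apply (l : ℝ) (hl : l ≠ 0) (x : V) :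
    dilatedBump l hl x = radialBump (l • x) := rfl

lemma dilatedBump_eq_of_norm_eq {l : ℝ} (hl : l ≠ 0) {x y : V} (hxy : ‖x‖ = ‖y‖) :
    dilatedBump l hl x = dilatedBump l hl y := by
  simp only [dilatedBump_apply, radialBump, norm_smul, hxy]

end Bump

section Fourier

variable {V E : Type*} [NormedAddCommGroup V] [InnerProductSpace ℝ V] [FiniteDimensional ℝ V]
  [MeasurableSpace V] [BorelSpace V] [NormedAddCommGroup E] [NormedSpace ℂ E]

lemma fourier_comp_smul (f : V → E) {l : ℝ} (hl : l ≠ 0) (ξ : V) :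
    𝓕 (fun x ↦ f (l • x)) ξ = |(l ^ Module.finrank ℝ V)⁻¹| • 𝓕 f (l⁻¹ • ξ) := by
  simp only [Real.fourier_eq]
  rw [← Measure.integral_comp_smul volume _ l]
  congr 1 with x
  rw [real_inner_smul_left, real_inner_smul_right, ← mul_assoc, mul_inv_cancel₀ hl, one_mul]

noncomputable def homSobolevNorm (s : ℝ) (f : V → E) : ℝ :=
  (∫ ξ, ‖ξ‖ ^ (2 * s) * ‖𝓕 f ξ‖ ^ 2) ^ ((1 : ℝ) / 2)

lemma homSobolevNorm_comp_smul (s : ℝ) (f : V → E) {l : ℝ} (hl : 0 < l) :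
    homSobolevNorm s (fun x ↦ f (l • x)) =
      l ^ (s - Module.finrank ℝ V / 2) * homSobolevNorm s f := by
  set d := Module.finrank ℝ V
  set G : V → ℝ := fun η ↦ ‖η‖ ^ (2 * s) * ‖𝓕 f η‖ ^ 2
  have hintegrand : ∀ ξ : V, ‖ξ‖ ^ (2 * s) * ‖𝓕 (fun x ↦ f (l • x)) ξ‖ ^ 2 =
      l ^ (2 * s) / (l ^ d) ^ 2 * G (l⁻¹ • ξ) := by
    intro ξ
    have hnorm : ‖ξ‖ = l * ‖l⁻¹ • ξ‖ := by
      rw [norm_smul, norm_inv, norm_of_nonneg hl.le, mul_inv_cancel_left₀ hl.ne']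
    rw [fourier_comp_smul f hl.ne', norm_smul, hnorm, mul_rpow hl.le (norm_nonneg _),
      abs_of_pos (by positivity), norm_of_nonneg (by positivity)]
    ring
  have hscale : l ^ (2 * s) / (l ^ d) ^ 2 * |l ^ d| = l ^ (2 * s - d) := by
    rw [abs_of_pos (by positivity), rpow_sub hl, rpow_natCast]
    field_simp
  simp only [homSobolevNorm, hintegrand, integral_const_mul]
  rw [Measure.integral_comp_inv_smul volume G l, smul_eq_mul, ← mul_assoc, hscale,
    mul_rpow (by positivity) (integral_nonneg fun η ↦ by positivity), ← rpow_mul hl.le]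
  congr 2
  ring

lemma integral_exp_inner_mul_fourier (f : 𝓢(V, ℂ)) (x : V) :
    ∫ ξ, Complex.exp (Complex.I * (⟪x, ξ⟫ : ℂ)) * 𝓕 (f : V → ℂ) ξ = f ((2 * π)⁻¹ • x) := by
  have := congr_fun (congr_arg (⇑) (FourierPair.fourierInv_fourier_eq (F := 𝓢(V, ℂ)) f))
    ((2 * π)⁻¹ • x)
  rw [SchwartzMap.fourierInv_coe, SchwartzMap.fourier_coe, Real.fourierInv_eq'] at this
  rw [← this]
  congr 1 with ξ
  rw [real_inner_smul_right, smul_eq_mul, real_inner_comm, mul_comm Complex.I]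
  congr 3
  field_simp

end Fourier

section Boussinesq

variable {n : ℕ}

noncomputable def boussinesqEvolution (t : ℝ) (f : EuclideanSpace ℝ (Fin n) → ℂ)
    (x : EuclideanSpace ℝ (Fin n)) : ℂ :=
  (((2 * π : ℝ) ^ n)⁻¹ : ℂ) *
    ∫ ξ, Complex.exp (Complex.I * ((⟪x, ξ⟫ + t * ‖ξ‖ * √(1 + ‖ξ‖ ^ 2) : ℝ) : ℂ)) * 𝓕 f ξ

noncomputable def boussinesqMaximal (f : EuclideanSpace ℝ (Fin n) → ℂ)
    (x : EuclideanSpace ℝ (Fin n)) : ℝ :=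
  ⨆ t : ℝ, ‖boussinesqEvolution t f x‖

lemma norm_boussinesqEvolution_le (t : ℝ) (f : EuclideanSpace ℝ (Fin n) → ℂ)
    (x : EuclideanSpace ℝ (Fin n)) :
    ‖boussinesqEvolution t f x‖ ≤ ((2 * π) ^ n)⁻¹ * ∫ ξ, ‖𝓕 f ξ‖ := by
  have hconst : ‖(((2 * π : ℝ) ^ n)⁻¹ : ℂ)‖ = ((2 * π) ^ n)⁻¹ := by
    rw [norm_inv, norm_pow, Complex.norm_real, norm_of_nonneg (by positivity)]
  rw [boussinesqEvolution, norm_mul, hconst]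
  gcongr
  refine (norm_integral_le_integral_norm _).trans_eq (congr_arg _ (funext fun ξ ↦ ?_))
  rw [norm_mul, mul_comm Complex.I, Complex.norm_exp_ofReal_mul_I, one_mul]

lemma boussinesqEvolution_zero (f : 𝓢(EuclideanSpace ℝ (Fin n), ℂ))
    (x : EuclideanSpace ℝ (Fin n)) :
    boussinesqEvolution 0 f x = (((2 * π : ℝ) ^ n)⁻¹ : ℂ) * f ((2 * π)⁻¹ • x) := by
  simp only [boussinesqEvolution, zero_mul, add_zero, integral_exp_inner_mul_fourier]

lemma norm_boussinesqEvolution_le_maximal (t : ℝ) (f : EuclideanSpace ℝ (Fin n) → ℂ)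
    (x : EuclideanSpace ℝ (Fin n)) :
    ‖boussinesqEvolution t f x‖ ≤ boussinesqMaximal f x :=
  le_ciSup ⟨_, Set.forall_mem_range.mpr fun t ↦ norm_boussinesqEvolution_le t f x⟩ t

lemma inv_two_pi_pow_le_boussinesqMaximal_dilatedBump {l : ℝ} (hl : 0 < l)
    {x : EuclideanSpace ℝ (Fin n)} (hx : ‖x‖ ≤ 2 * π / l) :
    ((2 * π) ^ n)⁻¹ ≤ boussinesqMaximal (dilatedBump l hl.ne') x := by
  have hbump : dilatedBump l hl.ne' ((2 * π)⁻¹ • x) = 1 := by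
    rw [dilatedBump_apply, radialBump_of_norm_le_one, Complex.ofReal_one]
    rw [smul_smul, norm_smul, norm_of_nonneg (by positivity)]
    calc l * (2 * π)⁻¹ * ‖x‖ ≤ l * (2 * π)⁻¹ * (2 * π / l) := by gcongr
      _ = 1 := by field_simp
  refine le_of_eq_of_le ?_ (norm_boussinesqEvolution_le_maximal 0 _ x)
  rw [boussinesqEvolution_zero, hbump, mul_one, norm_inv, norm_pow, Complex.norm_real,
    norm_of_nonneg (by positivity)]

lemma exists_lintegral_boussinesqMaximal_dilatedBump_ge (hn : 1 ≤ n) {q : ℝ} (hq : 0 < q)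
    (α : ℝ) : ∃ c > 0, ∀ l (hl : 0 < l), ENNReal.ofReal (c * l ^ (-(α + n))) ≤
      ∫⁻ x : EuclideanSpace ℝ (Fin n),
        ENNReal.ofReal (boussinesqMaximal (dilatedBump l hl.ne') x ^ q * ‖x‖ ^ α) := by
  have : Nontrivial (EuclideanSpace ℝ (Fin n)) :=
    Module.nontrivial_of_finrank_pos (R := ℝ) (by rwa [finrank_euclideanSpace_fin])
  have hfin := addHaar_dyadicAnnulus_lt_top (volume : Measure (EuclideanSpace ℝ (Fin n))) 1
  set a := (volume (dyadicAnnulus 1 : Set (EuclideanSpace ℝ (Fin n)))).toReal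
  have ha : 0 < a := ENNReal.toReal_pos (addHaar_dyadicAnnulus_one_pos volume).ne' hfin.ne
  set m := ((2 * π) ^ n)⁻¹ ^ q * min 1 (2⁻¹ ^ α)
  have hm : 0 < m := by positivity
  refine ⟨m * (2 * π) ^ (α + n) * a, by positivity, fun l hl ↦ ?_⟩
  set r := 2 * π / l
  have hr : 0 < r := by positivity
  have hpointwise : ∀ x ∈ (dyadicAnnulus r : Set (EuclideanSpace ℝ (Fin n))),
      ENNReal.ofReal (m * r ^ α) ≤
        ENNReal.ofReal (boussinesqMaximal (dilatedBump l hl.ne') x ^ q * ‖x‖ ^ α) := by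
    intro x hx
    have hmax := inv_two_pi_pow_le_boussinesqMaximal_dilatedBump hl (mem_ball_zero_iff.mp hx.1).le
    refine ENNReal.ofReal_le_ofReal ((mul_assoc _ _ _).trans_le (mul_le_mul ?_
      (mul_rpow_le_rpow_norm_of_mem_dyadicAnnulus hr α hx) (by positivity) ?_))
    · exact rpow_le_rpow (by positivity) hmax hq.le
    · exact rpow_nonneg ((by positivity : (0 : ℝ) ≤ _).trans hmax) q
  have hvolume :
      ENNReal.ofReal (m * r ^ α) * volume (dyadicAnnulus r : Set (EuclideanSpace ℝ (Fin n))) =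
        ENNReal.ofReal (m * (2 * π) ^ (α + n) * a * l ^ (-(α + n))) := by
    rw [addHaar_dyadicAnnulus volume hr, finrank_euclideanSpace_fin,
      ← ENNReal.ofReal_toReal hfin.ne, ← ENNReal.ofReal_mul (by positivity),
      ← ENNReal.ofReal_mul (by positivity)]
    have hpow : r ^ α * r ^ n = (2 * π) ^ (α + n) * l ^ (-(α + n)) := by
      rw [← rpow_natCast, ← rpow_add hr, div_rpow (by positivity) hl.le, rpow_neg hl.le,
        div_eq_mul_inv]
    congr 1
    linear_combination m * a * hpow
  rw [← hvolume]
  exact mul_measure_le_lintegral_of_forall_mem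
    (Metric.isOpen_ball.measurableSet.diff Metric.isClosed_closedBall.measurableSet) hpointwise

end Boussinesq

theorem weight_exponent_forced_general (n : ℕ) (hn : 1 ≤ n) (s q α : ℝ)
    (hq : 1 ≤ q) (C : ℝ)
    (h : ∀ f : SchwartzMap (EuclideanSpace ℝ (Fin n)) ℂ,
      (∀ x y : EuclideanSpace ℝ (Fin n), ‖x‖ = ‖y‖ → f x = f y) →
      (∫⁻ x : EuclideanSpace ℝ (Fin n),
          ENNReal.ofReal
            ((⨆ t : ℝ, ‖(((2 * π : ℝ) ^ n)⁻¹ : ℂ) *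
                ∫ ξ, Complex.exp (Complex.I *
                    ((⟪x, ξ⟫ + t * ‖ξ‖ * Real.sqrt (1 + ‖ξ‖ ^ 2) : ℝ) : ℂ)) *
                  𝓕 (f : EuclideanSpace ℝ (Fin n) → ℂ) ξ‖) ^ q * ‖x‖ ^ α))
            ^ ((1 : ℝ) / q)
        ≤ ENNReal.ofReal (C *
            (∫ ξ : EuclideanSpace ℝ (Fin n),
              ‖ξ‖ ^ (2 * s) * ‖𝓕 (f : EuclideanSpace ℝ (Fin n) → ℂ) ξ‖ ^ 2)
              ^ ((1 : ℝ) / 2))) :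
    α = q * ((n : ℝ) / 2 - s) - n := by
  have hq0 : 0 < q := by linarith
  obtain ⟨c, hc, hlower⟩ := exists_lintegral_boussinesqMaximal_dilatedBump_ge hn hq0 α
  set K := homSobolevNorm s (fun y : EuclideanSpace ℝ (Fin n) ↦ (radialBump y : ℂ))
  have hscaling : ∀ l : ℝ, 0 < l →
      c ^ (1 / q) * l ^ (-(α + n) * (1 / q)) ≤ (C * K) * l ^ (s - n / 2) := by
    intro l hl
    -- `h` is stated with `boussinesqMaximal` and `homSobolevNorm` unfolded
    have hl_est : ENNReal.ofReal (c * l ^ (-(α + n))) ^ (1 / q) ≤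
        ENNReal.ofReal (C * homSobolevNorm s (fun x ↦ (radialBump (l • x) : ℂ))) :=
      (ENNReal.rpow_le_rpow (hlower l hl) (by positivity)).trans
        (h (dilatedBump l hl.ne') fun x y ↦ dilatedBump_eq_of_norm_eq hl.ne')
    rw [homSobolevNorm_comp_smul s (fun y : EuclideanSpace ℝ (Fin n) ↦ (radialBump y : ℂ)) hl,
      finrank_euclideanSpace_fin,
      ENNReal.ofReal_rpow_of_nonneg (by positivity) (by positivity),
      ENNReal.ofReal_le_ofReal_iff', mul_rpow hc.le (by positivity), ← rpow_mul hl.le] at hl_est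
    exact (hl_est.resolve_right (not_le.mpr (by positivity))).trans_eq (by ring)
  have hexponent := eq_of_forall_mul_rpow_le (rpow_pos_of_pos hc _) hscaling
  field_simp at hexponent
  linarith

/-- If the weighted maximal estimate for the Boussinesq maximal operator
`B**f(x) = sup_t |B_t f(x)|` holds (with weight `|x|^α`) for all radial
Schwartz functions, then necessarily `α = q(n/2 − s) − n`. -/
theorem weight_exponent_forced (n : ℕ) (hn : 1 ≤ n) (s q α : ℝ)
    (hs : 0 < s) (hq : 1 ≤ q) (hα : -(n : ℝ) < α) (C : ℝ)
    (h : ∀ f : SchwartzMap (EuclideanSpace ℝ (Fin n)) ℂ,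
      (∀ x y : EuclideanSpace ℝ (Fin n), ‖x‖ = ‖y‖ → f x = f y) →
      (∫⁻ x : EuclideanSpace ℝ (Fin n),
          ENNReal.ofReal
            ((⨆ t : ℝ, ‖(((2 * π : ℝ) ^ n)⁻¹ : ℂ) *
                ∫ ξ, Complex.exp (Complex.I *
                    ((⟪x, ξ⟫ + t * ‖ξ‖ * Real.sqrt (1 + ‖ξ‖ ^ 2) : ℝ) : ℂ)) *
                  𝓕 (f : EuclideanSpace ℝ (Fin n) → ℂ) ξ‖) ^ q * ‖x‖ ^ α))
            ^ ((1 : ℝ) / q)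
        ≤ ENNReal.ofReal (C *
            (∫ ξ : EuclideanSpace ℝ (Fin n),
              ‖ξ‖ ^ (2 * s) * ‖𝓕 (f : EuclideanSpace ℝ (Fin n) → ℂ) ξ‖ ^ 2)
              ^ ((1 : ℝ) / 2))) :
    α = q * ((n : ℝ) / 2 - s) - n :=
  weight_exponent_forced_general n hn s q α hq C h
end
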